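/- arXiv:1202.6089 — 7 statements merged into one kernel-verified Lean document; each statement's English description precedes it below -/
import Mathlib

section
/- Let P be a partition of a positive integer n and let k be a positive integer. Then every k-U-chain in D_P has cardinality at most the maximum cardinality of a union of k chains in the poset D_P; that is, writing u_k for the maximum cardinality of a k-U-chain in D_P and c_k for the maximum cardinality of a union of k chains in the poset D_P, one has u_k ≤ c_k for all k ≥ 1 (equivalently, λ_U(P) is dominated by λ(P)). -/
/-!
Common definitions for the poset `D_P` attached to a partition `P` of `n`,
its `U`-chains, the quantity `s(P,a)` (cardinality of a simple `U`-chain),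
and `U`-processes, following Khatami, "The poset of the nilpotent commutator
of a nilpotent matrix".

A partition of `n` is encoded by its multiplicity function `np : ℕ →₀ ℕ`
(`np p` = number of parts equal to `p`), with `np 0 = 0` and `Σ p·np p = n`.
-/

/-- Vertices are triples `(u, p, k)`. -/
abbrev Vtx : Type := ℕ × ℕ × ℕ

/-- `np` is the multiplicity function of a partition of `n`. -/
def IsPartitionOf (n : ℕ) (np : ℕ →₀ ℕ) : Prop :=
  np 0 = 0 ∧ (np.sum fun p m => p * m) = n

/-- The vertex set of the diagram `D_P`: triples `(u,p,k)` with
`1 ≤ u ≤ p` and `1 ≤ k ≤ np p`. -/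
def vertexSet (np : ℕ →₀ ℕ) : Set Vtx :=
  {v | 1 ≤ v.1 ∧ v.1 ≤ v.2.1 ∧ 1 ≤ v.2.2 ∧ v.2.2 ≤ np v.2.1}

/-- The set `S_i` for the value `a`:
`S_i = {(u,p,k) : p ∈ {a, a+1}, i ≤ u ≤ p−i+1} ∪ {(u,p,k) : p > a+1, u ∈ {i, p−i+1}}`,
a subset of the vertex set of `D_P`.  (The condition `u ≤ p - i + 1` is written
as `u + i ≤ p + 1` to avoid truncated subtraction.) -/
def Sset (np : ℕ →₀ ℕ) (i a : ℕ) : Set Vtx :=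
  {v ∈ vertexSet np |
    ((v.2.1 = a ∨ v.2.1 = a + 1) ∧ i ≤ v.1 ∧ v.1 + i ≤ v.2.1 + 1) ∨
    (a + 1 < v.2.1 ∧ (v.1 = i ∨ v.1 + i = v.2.1 + 1))}

/-- The `r`-`U`-chain `U_{b 1, …, b r} = S_1 ∪ ⋯ ∪ S_r` in `D_P`. -/
def UChain (np : ℕ →₀ ℕ) (b : ℕ → ℕ) (r : ℕ) : Set Vtx :=
  ⋃ i ∈ Set.Icc 1 r, Sset np i (b i)

/-- `b 1 < b 2 < ⋯ < b r` are positive with consecutive differences at least `2`. -/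
def ValidSeq (b : ℕ → ℕ) (r : ℕ) : Prop :=
  (∀ i, 1 ≤ i → i ≤ r → 1 ≤ b i) ∧ ∀ i, 1 ≤ i → i < r → b i + 2 ≤ b (i + 1)

/-- `s(P,a) = a·n_a + (a+1)·n_{a+1} + 2·Σ_{p>a+1} n_p`, the cardinality of the
simple `U`-chain `U_a` in `D_P`. -/
def sVal (np : ℕ →₀ ℕ) (a : ℕ) : ℕ :=
  a * np a + (a + 1) * np (a + 1) +
    2 * ∑ p ∈ np.support.filter (fun p => a + 1 < p), np p

/-- `a` is optimal for `P`: `U_a` is a maximum simple `U`-chain in `D_P`. -/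
def OptimalFor (np : ℕ →₀ ℕ) (a : ℕ) : Prop :=
  1 ≤ a ∧ ∀ c, 1 ≤ c → sVal np c ≤ sVal np a

/-- `p` is a part of the partition with multiplicity function `np`. -/
def IsPart (np : ℕ →₀ ℕ) (p : ℕ) : Prop := 0 < p ∧ 0 < np p

/-- The covering relation of the poset `D_P`:  `Cov np x y` means `y` covers `x`.
(i)  for consecutive parts `q < p` and `1 ≤ u ≤ q`, `(u, p, np p)` is covered by `(u, q, 1)`;
(ii) for consecutive parts `p < q` and `1 ≤ u ≤ p`, `(u, p, np p)` is covered by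
     `(u + q − p, q, 1)`;
(iii) for a part `p`, `1 ≤ u ≤ p`, `1 ≤ k < np p`, `(u,p,k)` is covered by `(u,p,k+1)`;
(iv) for an isolated part `p` (neither `p−1` nor `p+1` is a part) and `1 ≤ u < p`,
     `(u, p, np p)` is covered by `(u+1, p, 1)`. -/
def Cov (np : ℕ →₀ ℕ) (x y : Vtx) : Prop :=
  (∃ p q u, IsPart np p ∧ IsPart np q ∧ q < p ∧
      (∀ t, q < t → t < p → ¬ IsPart np t) ∧
      1 ≤ u ∧ u ≤ q ∧ x = (u, p, np p) ∧ y = (u, q, 1)) ∨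
  (∃ p q u, IsPart np p ∧ IsPart np q ∧ p < q ∧
      (∀ t, p < t → t < q → ¬ IsPart np t) ∧
      1 ≤ u ∧ u ≤ p ∧ x = (u, p, np p) ∧ y = (u + (q - p), q, 1)) ∨
  (∃ p u k, IsPart np p ∧ 1 ≤ u ∧ u ≤ p ∧ 1 ≤ k ∧ k < np p ∧
      x = (u, p, k) ∧ y = (u, p, k + 1)) ∨
  (∃ p u, IsPart np p ∧ ¬ IsPart np (p - 1) ∧ ¬ IsPart np (p + 1) ∧
      1 ≤ u ∧ u < p ∧ x = (u, p, np p) ∧ y = (u + 1, p, 1))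

/-- The partial order of `D_P`: reflexive–transitive closure of the covering relation. -/
def leD (np : ℕ →₀ ℕ) : Vtx → Vtx → Prop := Relation.ReflTransGen (Cov np)

/-- A chain in `D_P`: a subset of the vertex set that is totally ordered by `leD`. -/
def IsChainD (np : ℕ →₀ ℕ) (C : Set Vtx) : Prop :=
  C ⊆ vertexSet np ∧ ∀ x ∈ C, ∀ y ∈ C, leD np x y ∨ leD np y x

/-- `u_r(P)`: the maximum cardinality of an `r`-`U`-chain in `D_P`. -/
noncomputable def uMax (np : ℕ →₀ ℕ) (r : ℕ) : ℕ :=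
  sSup {m | ∃ b : ℕ → ℕ, ValidSeq b r ∧ (UChain np b r).ncard = m}

/-- The relabeling injection `ι : D_{P'} → D_P` attached to removing `U_a`. -/
def iotaMap (a : ℕ) (v : Vtx) : Vtx :=
  if v.2.1 < a then v else (v.1 + 1, v.2.1 + 2, v.2.2)

/-- `iotaComp aa i = ι_1 ∘ ⋯ ∘ ι_i`, where `ι_j` is the relabeling map for `aa j`. -/
def iotaComp (aa : ℕ → ℕ) : ℕ → Vtx → Vtx
  | 0 => id
  | i + 1 => iotaComp aa i ∘ iotaMap (aa (i + 1))

/-- `(P_1, …, P_{r+1}; a_1, …, a_r)` is a `U`-process of length `r` for `P`: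
`P_1 = P`, each `a_i` is optimal for `P_i`, and `P_{i+1}` is obtained from `P_i`
by deleting the parts equal to `a_i` or `a_i + 1` and decreasing by `2` every
part greater than `a_i + 1`. -/
def IsUProcess (r : ℕ) (np : ℕ →₀ ℕ) (Ps : ℕ → ℕ →₀ ℕ) (aa : ℕ → ℕ) : Prop :=
  Ps 1 = np ∧
    ∀ i, 1 ≤ i → i ≤ r →
      OptimalFor (Ps i) (aa i) ∧
        ∀ m, Ps (i + 1) m = if m < aa i then Ps i m else Ps i (m + 2)

/-- The subset `C_i = (ι_1 ∘ ⋯ ∘ ι_{i−1})(U_{a_i}) ⊆ D_P` of a `U`-process. -/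
def Cset (Ps : ℕ → ℕ →₀ ℕ) (aa : ℕ → ℕ) (i : ℕ) : Set Vtx :=
  iotaComp aa (i - 1) '' Sset (Ps i) 1 (aa i)

section ChainLemmas

variable (np : ℕ →₀ ℕ)

/-- Within a fixed `(u,p)`, the multiplicity index `k` increases along the order. -/
lemma leD_kchain {p u k k' : ℕ} (hp : IsPart np p) (hu : 1 ≤ u) (hup : u ≤ p)
    (hk : 1 ≤ k) (hkk : k ≤ k') (hk' : k' ≤ np p) :
    leD np (u, p, k) (u, p, k') := by
  induction k' with
  | zero => omega
  | succ m ih =>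
    rcases Nat.lt_or_ge k (m + 1) with h | h
    · have h1 : leD np (u, p, k) (u, p, m) := ih (by omega) (by omega)
      refine h1.tail ?_
      exact Or.inr (Or.inr (Or.inl ⟨p, u, m, hp, hu, hup, by omega, by omega, rfl, rfl⟩))
    · have : k = m + 1 := by omega
      subst this
      exact Relation.ReflTransGen.refl

/-- Within a part `p`, one can increase the row index by one. -/
lemma leD_rowstep {p u : ℕ} (hp : IsPart np p) (hu : 1 ≤ u) (hup : u < p) :
    leD np (u, p, np p) (u + 1, p, 1) := by
  by_cases h1 : IsPart np (p + 1)
  · have e : u + (p + 1 - p) = u + 1 := by omega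
    have s1 : Cov np (u, p, np p) (u + 1, p + 1, 1) := by
      refine Or.inr (Or.inl ⟨p, p + 1, u, hp, h1, by omega, ?_, hu, by omega, rfl, ?_⟩)
      · intro t ht1 ht2; omega
      · rw [e]
    have s2 : leD np (u + 1, p + 1, 1) (u + 1, p + 1, np (p + 1)) :=
      leD_kchain np h1 (by omega) (by omega) (by omega) h1.2 le_rfl
    have s3 : Cov np (u + 1, p + 1, np (p + 1)) (u + 1, p, 1) := by
      refine Or.inl ⟨p + 1, p, u + 1, h1, hp, by omega, ?_, by omega, by omega, rfl, rfl⟩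
      intro t ht1 ht2; omega
    exact ((Relation.ReflTransGen.single s1).trans s2).trans
      (Relation.ReflTransGen.single s3)
  · by_cases h2 : IsPart np (p - 1)
    · have s1 : Cov np (u, p, np p) (u, p - 1, 1) := by
        refine Or.inl ⟨p, p - 1, u, hp, h2, by omega, ?_, hu, by omega, rfl, rfl⟩
        intro t ht1 ht2; omega
      have s2 : leD np (u, p - 1, 1) (u, p - 1, np (p - 1)) :=
        leD_kchain np h2 hu (by omega) (by omega) h2.2 le_rfl
      have e : u + (p - (p - 1)) = u + 1 := by
        have := h2.1; omega
      have s3 : Cov np (u, p - 1, np (p - 1)) (u + 1, p, 1) := by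
        refine Or.inr (Or.inl ⟨p - 1, p, u, h2, hp, by omega, ?_, hu, by omega, rfl, ?_⟩)
        · intro t ht1 ht2; omega
        · rw [e]
      exact ((Relation.ReflTransGen.single s1).trans s2).trans
        (Relation.ReflTransGen.single s3)
    · exact Relation.ReflTransGen.single
        (Or.inr (Or.inr (Or.inr ⟨p, u, hp, h2, h1, hu, hup, rfl, rfl⟩)))

/-- Within a part `p`, full comparability in the lexicographic order on `(u,k)`. -/
lemma leD_within {p u u' k k' : ℕ} (hp : IsPart np p) (hu : 1 ≤ u) (huu : u ≤ u')
    (hu' : u' ≤ p) (hk : 1 ≤ k) (hk2 : k ≤ np p) (hk' : 1 ≤ k') (hk2' : k' ≤ np p)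
    (htie : u = u' → k ≤ k') : leD np (u, p, k) (u', p, k') := by
  revert hu' htie
  induction u', huu using Nat.le_induction with
  | base =>
    intro hu' htie
    exact leD_kchain np hp hu hu' hk (htie rfl) hk2'
  | succ m hm ih =>
    intro hu' htie
    rcases eq_or_lt_of_le hm with he | hlt
    · subst he
      have s1 : leD np (u, p, k) (u, p, np p) :=
        leD_kchain np hp hu (by omega) hk hk2 le_rfl
      have s2 : leD np (u, p, np p) (u + 1, p, 1) := leD_rowstep np hp hu (by omega)
      have s3 : leD np (u + 1, p, 1) (u + 1, p, k') :=
        leD_kchain np hp (by omega) (by omega) (by omega) hk' hk2'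
      exact (s1.trans s2).trans s3
    · have s1 : leD np (u, p, k) (m, p, k') :=
        ih (by omega) (fun h => absurd h (by omega))
      have s2 : leD np (m, p, k') (m, p, np p) :=
        leD_kchain np hp (by omega) (by omega) hk' hk2' le_rfl
      have s3 : leD np (m, p, np p) (m + 1, p, 1) :=
        leD_rowstep np hp (by omega) (by omega)
      have s4 : leD np (m + 1, p, 1) (m + 1, p, k') :=
        leD_kchain np hp (by omega) hu' (by omega) hk' hk2'
      exact ((s1.trans s2).trans s3).trans s4

/-- Descend to a smaller part, keeping the row index. -/
lemma leD_descend {p' u : ℕ} (hp' : IsPart np p') (hu : 1 ≤ u) (hup : u ≤ p') :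
    ∀ p, IsPart np p → p' < p → leD np (u, p, np p) (u, p', 1) := by
  intro p
  induction p using Nat.strong_induction_on with
  | _ p ih =>
    intro hp hpp
    by_cases hbet : ∃ t, p' < t ∧ t < p ∧ IsPart np t
    · classical
      set s : Finset ℕ := np.support.filter (fun t => p' < t ∧ t < p) with hs
      have hne : s.Nonempty := by
        obtain ⟨t, ht1, ht2, ht3⟩ := hbet
        refine ⟨t, Finset.mem_filter.mpr ⟨Finsupp.mem_support_iff.mpr ?_, ht1, ht2⟩⟩
        have := ht3.2; omega
      set q := s.max' hne with hq
      have hqmem : q ∈ s := s.max'_mem hne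
      have hq1 : p' < q ∧ q < p := by
        have := Finset.mem_filter.mp hqmem; exact this.2
      have hqpart : IsPart np q := by
        have := Finset.mem_filter.mp hqmem
        refine ⟨by omega, ?_⟩
        have := Finsupp.mem_support_iff.mp this.1
        omega
      have hmax : ∀ t, q < t → t < p → ¬ IsPart np t := by
        intro t ht1 ht2 ht3
        have : t ∈ s := Finset.mem_filter.mpr
          ⟨Finsupp.mem_support_iff.mpr (by have := ht3.2; omega), by omega, ht2⟩
        have := s.le_max' t this
        omega
      have s1 : Cov np (u, p, np p) (u, q, 1) :=
        Or.inl ⟨p, q, u, hp, hqpart, hq1.2, hmax, hu, by omega, rfl, rfl⟩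
      have s2 : leD np (u, q, 1) (u, q, np q) :=
        leD_kchain np hqpart hu (by omega) (by omega) hqpart.2 le_rfl
      have s3 : leD np (u, q, np q) (u, p', 1) := ih q hq1.2 hqpart hq1.1
      exact ((Relation.ReflTransGen.single s1).trans s2).trans s3
    · refine Relation.ReflTransGen.single
        (Or.inl ⟨p, p', u, hp, hp', hpp, ?_, hu, hup, rfl, rfl⟩)
      intro t ht1 ht2 ht3
      exact hbet ⟨t, ht1, ht2, ht3⟩

/-- Ascend to a larger part, shifting the row index accordingly. -/
lemma leD_ascend {q : ℕ} (hq : IsPart np q) :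
    ∀ d p u, q - p = d → IsPart np p → p < q → 1 ≤ u → u ≤ p →
      leD np (u, p, np p) (u + (q - p), q, 1) := by
  intro d
  induction d using Nat.strong_induction_on with
  | _ d ih =>
    intro p u hd hp hpq hu hup
    by_cases hbet : ∃ t, p < t ∧ t < q ∧ IsPart np t
    · classical
      set s : Finset ℕ := np.support.filter (fun t => p < t ∧ t < q) with hs
      have hne : s.Nonempty := by
        obtain ⟨t, ht1, ht2, ht3⟩ := hbet
        refine ⟨t, Finset.mem_filter.mpr ⟨Finsupp.mem_support_iff.mpr ?_, ht1, ht2⟩⟩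
        have := ht3.2; omega
      set t := s.min' hne with htdef
      have htmem : t ∈ s := s.min'_mem hne
      have ht1 : p < t ∧ t < q := (Finset.mem_filter.mp htmem).2
      have htpart : IsPart np t := by
        have := Finset.mem_filter.mp htmem
        refine ⟨by omega, ?_⟩
        have := Finsupp.mem_support_iff.mp this.1
        omega
      have hmin : ∀ r, p < r → r < t → ¬ IsPart np r := by
        intro r hr1 hr2 hr3
        have : r ∈ s := Finset.mem_filter.mpr
          ⟨Finsupp.mem_support_iff.mpr (by have := hr3.2; omega), hr1, by omega⟩
        have := s.min'_le r this
        omega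
      have s1 : Cov np (u, p, np p) (u + (t - p), t, 1) :=
        Or.inr (Or.inl ⟨p, t, u, hp, htpart, ht1.1, hmin, hu, hup, rfl, rfl⟩)
      have s2 : leD np (u + (t - p), t, 1) (u + (t - p), t, np t) :=
        leD_kchain np htpart (by omega) (by omega) (by omega) htpart.2 le_rfl
      have s3 : leD np (u + (t - p), t, np t) (u + (t - p) + (q - t), q, 1) :=
        ih (q - t) (by omega) t (u + (t - p)) rfl htpart ht1.2 (by omega) (by omega)
      have e : u + (t - p) + (q - t) = u + (q - p) := by omega
      rw [e] at s3
      exact ((Relation.ReflTransGen.single s1).trans s2).trans s3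
    · refine Relation.ReflTransGen.single
        (Or.inr (Or.inl ⟨p, q, u, hp, hq, hpq, ?_, hu, hup, rfl, rfl⟩))
      intro t ht1 ht2 ht3
      exact hbet ⟨t, ht1, ht2, ht3⟩

/-- Master comparability lemma: monotonicity of `(u, u - p)` suffices. -/
lemma leD_master {p p' u u' k k' : ℕ} (hp : IsPart np p) (hp' : IsPart np p')
    (hu : 1 ≤ u) (hup : u ≤ p) (hu' : 1 ≤ u') (hup' : u' ≤ p')
    (hk : 1 ≤ k) (hk2 : k ≤ np p) (hk' : 1 ≤ k') (hk2' : k' ≤ np p')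
    (h1 : u ≤ u') (h2 : u + p' ≤ u' + p)
    (htie : p = p' → u = u' → k ≤ k') :
    leD np (u, p, k) (u', p', k') := by
  rcases lt_trichotomy p p' with h | h | h
  · have s1 : leD np (u, p, k) (u, p, np p) := leD_kchain np hp hu hup hk hk2 le_rfl
    have s2 : leD np (u, p, np p) (u + (p' - p), p', 1) :=
      leD_ascend np hp' (p' - p) p u rfl hp h hu hup
    have s3 : leD np (u + (p' - p), p', 1) (u', p', k') :=
      leD_within np hp' (by omega) (by omega) hup' (by omega) hp'.2 hk' hk2'
        (fun _ => hk')
    exact (s1.trans s2).trans s3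
  · subst h
    exact leD_within np hp hu h1 hup' hk hk2 hk' hk2' (htie rfl)
  · have s1 : leD np (u, p, k) (u, p, np p) := leD_kchain np hp hu hup hk hk2 le_rfl
    have s2 : leD np (u, p, np p) (u, p', 1) :=
      leD_descend np hp' hu (by omega) p hp h
    have s3 : leD np (u, p', 1) (u', p', k') :=
      leD_within np hp' hu h1 hup' (by omega) hp'.2 hk' hk2' (fun _ => hk')
    exact (s1.trans s2).trans s3

/-- Each set `S_i` (for `a ≥ 2i − 1`) is a chain in `D_P`. -/
lemma sset_isChain {i a : ℕ} (hi : 1 ≤ i) (ha : 2 * i ≤ a + 1) :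
    IsChainD np (Sset np i a) := by
  constructor
  · intro v hv; exact hv.1
  · rintro ⟨u, p, k⟩ hx ⟨u', p', k'⟩ hy
    obtain ⟨⟨hu1, hu2, hk1, hk2⟩, hcx⟩ := hx
    obtain ⟨⟨hu1', hu2', hk1', hk2'⟩, hcy⟩ := hy
    simp only at hu1 hu2 hk1 hk2 hu1' hu2' hk1' hk2' hcx hcy
    have hp : IsPart np p := ⟨by omega, by omega⟩
    have hp' : IsPart np p' := ⟨by omega, by omega⟩
    have key : (u ≤ u' ∧ u + p' ≤ u' + p) ∨ (u' ≤ u ∧ u' + p ≤ u + p') := by omega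
    by_cases hpos : p = p' ∧ u = u'
    · obtain ⟨rfl, rfl⟩ := hpos
      rcases le_total k k' with h | h
      · exact Or.inl (leD_master np hp hp hu1 hu2 hu1 hu2 hk1 hk2 hk1' hk2'
          le_rfl le_rfl (fun _ _ => h))
      · exact Or.inr (leD_master np hp hp hu1' hu2' hu1 hu2 hk1' hk2' hk1 hk2
          le_rfl le_rfl (fun _ _ => h))
    · rcases key with ⟨ha1, ha2⟩ | ⟨ha1, ha2⟩
      · exact Or.inl (leD_master np hp hp' hu1 hu2 hu1' hu2' hk1 hk2 hk1' hk2'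
          ha1 ha2 (fun he1 he2 => absurd ⟨he1, he2⟩ hpos))
      · exact Or.inr (leD_master np hp' hp hu1' hu2' hu1 hu2 hk1' hk2' hk1 hk2
          ha1 ha2 (fun he1 he2 => absurd ⟨he1.symm, he2.symm⟩ hpos))

lemma validSeq_lb {b : ℕ → ℕ} {k : ℕ} (hb : ValidSeq b k) :
    ∀ i, 1 ≤ i → i ≤ k → 2 * i ≤ b i + 1 := by
  intro i
  induction i with
  | zero => omega
  | succ m ih =>
    intro _ hm
    rcases Nat.eq_zero_or_pos m with h | h
    · subst h
      have := hb.1 1 le_rfl hm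
      simp only [Nat.zero_add]
      omega
    · have h1 := ih (by omega) (by omega)
      have h2 := hb.2 m (by omega) (by omega)
      omega

end ChainLemmas

/-- every `k`-`U`-chain in `D_P` has cardinality at most the maximum
cardinality of a union of `k` chains in the poset `D_P` (so `u_k ≤ c_k`, i.e.
`λ_U(P)` is dominated by `λ(P)`). -/
theorem uChain_card_le_union_of_chains_card
    (n : ℕ) (hn : 0 < n) (np : ℕ →₀ ℕ) (hP : IsPartitionOf n np)
    (k : ℕ) (hk : 1 ≤ k) (b : ℕ → ℕ) (hb : ValidSeq b k) :
    ∃ C : ℕ → Set Vtx,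
      (∀ i, 1 ≤ i → i ≤ k → IsChainD np (C i)) ∧
      (UChain np b k).ncard ≤ (⋃ i ∈ Set.Icc 1 k, C i).ncard := by
  refine ⟨fun i => Sset np i (b i), ?_, ?_⟩
  · intro i h1 h2
    exact sset_isChain np h1 (validSeq_lb hb i h1 h2)
  · exact le_rfl
end

section
/- Let P be a partition of a positive integer n and let a_1 < a_2 < … < a_r be positive integers with a_{i+1} ≥ a_i + 2 for 1 ≤ i < r. Then for each 1 ≤ i ≤ r the set S_i appearing in the definition of the r-U-chain U_{a_1,…,a_r} is a chain in the poset D_P, and S_i ∩ S_j = ∅ whenever i ≠ j. -/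
namespace UchainAux

/-- Lexicographic "key" order on vertices: `u` ascending, then `p` descending,
then `k` ascending.  The elements of `Sset np i a` are totally ordered by this,
compatibly with `leD`. -/
def klt (x y : Vtx) : Prop :=
  x.1 < y.1 ∨ (x.1 = y.1 ∧ (y.2.1 < x.2.1 ∨ (x.2.1 = y.2.1 ∧ x.2.2 < y.2.2)))

lemma klt_def {u p k u' p' k' : ℕ} :
    klt (u,p,k) (u',p',k') ↔
      (u < u' ∨ (u = u' ∧ (p' < p ∨ (p = p' ∧ k < k')))) := Iff.rfl

lemma klt_total {x y : Vtx} (h : ¬ klt y x) : klt x y ∨ x = y := by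
  obtain ⟨a,b,c⟩ := x; obtain ⟨d,e,f⟩ := y
  rw [klt_def] at h ⊢
  by_cases hxy : a = d ∧ b = e ∧ c = f
  · right; rw [hxy.1, hxy.2.1, hxy.2.2]
  · left; omega

lemma klt_tri (x y : Vtx) : klt x y ∨ x = y ∨ klt y x := by
  by_cases h : klt y x
  · right; right; exact h
  · rcases klt_total h with h1 | h1
    · left; exact h1
    · right; left; exact h1

lemma mem_S {np : ℕ →₀ ℕ} {i a u p k : ℕ} :
    (u,p,k) ∈ Sset np i a ↔
      (1 ≤ u ∧ u ≤ p ∧ 1 ≤ k ∧ k ≤ np p) ∧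
      (((p = a ∨ p = a+1) ∧ i ≤ u ∧ u + i ≤ p + 1) ∨
        (a+1 < p ∧ (u = i ∨ u + i = p + 1))) := Iff.rfl

lemma cov_le {np : ℕ →₀ ℕ} {x y : Vtx} (h : Cov np x y) : leD np x y :=
  Relation.ReflTransGen.single h

lemma kstep (np : ℕ →₀ ℕ) {p u : ℕ} (hp : IsPart np p) (hu1 : 1 ≤ u) (hup : u ≤ p) :
    ∀ k' k, 1 ≤ k → k ≤ k' → k' ≤ np p → leD np (u,p,k) (u,p,k') := by
  intro k'
  induction k' with
  | zero => intro k h1 h2 h3; exact absurd h2 (by omega)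
  | succ n ih =>
    intro k h1 h2 h3
    rcases Nat.eq_or_lt_of_le h2 with rfl | hlt
    · exact Relation.ReflTransGen.refl
    · exact (ih k h1 (by omega) (by omega)).trans
        (cov_le (Or.inr (Or.inr (Or.inl
          ⟨p, u, n, hp, hu1, hup, by omega, by omega, rfl, rfl⟩))))

lemma stepU (np : ℕ →₀ ℕ) {p u : ℕ} (hp : IsPart np p) (hu1 : 1 ≤ u) (hup : u < p) :
    leD np (u, p, np p) (u+1, p, 1) := by
  by_cases h1 : IsPart np (p+1)
  · have he1 : ((u+1 : ℕ), p+1, 1) = ((u + (p+1-p) : ℕ), p+1, 1) := by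
      have h : u + (p+1-p) = u+1 := by omega
      rw [h]
    have c1 : Cov np (u,p,np p) (u+1, p+1, 1) :=
      Or.inr (Or.inl ⟨p, p+1, u, hp, h1, by omega,
        fun t ha hb => absurd ha (by omega), hu1, by omega, rfl, he1⟩)
    have c2 : leD np (u+1, p+1, 1) (u+1, p+1, np (p+1)) :=
      kstep np h1 (by omega) (by omega) (np (p+1)) 1 le_rfl h1.2 le_rfl
    have c3 : Cov np (u+1, p+1, np (p+1)) (u+1, p, 1) :=
      Or.inl ⟨p+1, p, u+1, h1, hp, by omega,
        fun t ha hb => absurd ha (by omega), by omega, by omega, rfl, rfl⟩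
    exact (cov_le c1).trans (c2.trans (cov_le c3))
  · by_cases h2 : IsPart np (p-1)
    · have c1 : Cov np (u,p,np p) (u, p-1, 1) :=
      Or.inl ⟨p, p-1, u, hp, h2, by omega,
        fun t ha hb => absurd ha (by omega), hu1, by omega, rfl, rfl⟩
      have c2 : leD np (u, p-1, 1) (u, p-1, np (p-1)) :=
        kstep np h2 hu1 (by omega) (np (p-1)) 1 le_rfl h2.2 le_rfl
      have he3 : ((u+1 : ℕ), p, 1) = ((u + (p-(p-1)) : ℕ), p, 1) := by
        have h : u + (p-(p-1)) = u+1 := by omega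
        rw [h]
      have c3 : Cov np (u, p-1, np (p-1)) (u+1, p, 1) :=
        Or.inr (Or.inl ⟨p-1, p, u, h2, hp, by omega,
          fun t ha hb => absurd ha (by omega), hu1, by omega, rfl, he3⟩)
      exact (cov_le c1).trans (c2.trans (cov_le c3))
    · exact cov_le (Or.inr (Or.inr (Or.inr ⟨p, u, hp, h2, h1, hu1, hup, rfl, rfl⟩)))

lemma climb (np : ℕ →₀ ℕ) {p u : ℕ} (hp : IsPart np p) (hu1 : 1 ≤ u) :
    ∀ u', u < u' → u' ≤ p → leD np (u,p,np p) (u',p,1) := by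
  intro u'
  induction u' with
  | zero => intro h1 h2; exact absurd h1 (by omega)
  | succ n ih =>
    intro h1 h2
    rcases Nat.lt_or_ge u n with h | h
    · exact (ih h (by omega)).trans
        ((kstep np hp (by omega) (by omega) (np p) 1 le_rfl hp.2 le_rfl).trans
          (stepU np hp (by omega) (by omega)))
    · have he : u = n := by omega
      subst he
      exact stepU np hp hu1 (by omega)

end UchainAux
namespace UchainAux

lemma exists_min_part (np : ℕ →₀ ℕ) {t0 p : ℕ} (h1 : p < t0) (h2 : 0 < np t0) :
    ∃ q, 0 < np q ∧ p < q ∧ ∀ t, 0 < np t → p < t → q ≤ t := by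
  have hTne : (np.support.filter (fun t => p < t)).Nonempty :=
    ⟨t0, by simp only [Finset.mem_filter, Finsupp.mem_support_iff]; omega⟩
  have hqT := Finset.min'_mem _ hTne
  rw [Finset.mem_filter, Finsupp.mem_support_iff] at hqT
  exact ⟨(np.support.filter (fun t => p < t)).min' hTne, by omega, hqT.2,
    fun t ha hb => Finset.min'_le _ t (by
      rw [Finset.mem_filter, Finsupp.mem_support_iff]; exact ⟨by omega, hb⟩)⟩

lemma exists_max_part (np : ℕ →₀ ℕ) {t0 p : ℕ} (h1 : t0 < p) (h2 : 0 < np t0) :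
    ∃ q, 0 < np q ∧ q < p ∧ ∀ t, 0 < np t → t < p → t ≤ q := by
  have hTne : (np.support.filter (fun t => t < p)).Nonempty :=
    ⟨t0, by simp only [Finset.mem_filter, Finsupp.mem_support_iff]; omega⟩
  have hqT := Finset.max'_mem _ hTne
  rw [Finset.mem_filter, Finsupp.mem_support_iff] at hqT
  exact ⟨(np.support.filter (fun t => t < p)).max' hTne, by omega, hqT.2,
    fun t ha hb => Finset.le_max' _ t (by
      rw [Finset.mem_filter, Finsupp.mem_support_iff]; exact ⟨by omega, hb⟩)⟩

lemma succ_step (np : ℕ →₀ ℕ) (h0 : np 0 = 0) {i a : ℕ} (hi : 1 ≤ i) (hia : 2*i ≤ a + 1)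
    {x y : Vtx} (hx : x ∈ Sset np i a) (hy : y ∈ Sset np i a) (hxy : klt x y) :
    ∃ z ∈ Sset np i a, leD np x z ∧ klt x z ∧ ¬ klt y z := by
  obtain ⟨u, p, k⟩ := x
  obtain ⟨uy, py, ky⟩ := y
  rw [mem_S] at hx hy
  rw [klt_def] at hxy
  obtain ⟨⟨hu1, hup, hk1, hknp⟩, hxS⟩ := hx
  obtain ⟨⟨huy1, huyp, hky1, hkynp⟩, hyS⟩ := hy
  have hpp : IsPart np p := ⟨by omega, by omega⟩
  have hbrp : py = p → np py = np p := fun h => by rw [h]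
  have hbra : py = a → np py = np a := fun h => by rw [h]
  have hbra1 : py = a+1 → np py = np (a+1) := fun h => by rw [h]
  by_cases hkc : k < np p
  · -- case C1: increase k
    refine ⟨(u,p,k+1), ?_, cov_le (Or.inr (Or.inr (Or.inl
      ⟨p, u, k, hpp, hu1, hup, hk1, hkc, rfl, rfl⟩))), ?_, ?_⟩
    · rw [mem_S]; omega
    · rw [klt_def]; omega
    · rw [klt_def]; omega
  have hke : k = np p := by omega
  subst hke
  by_cases htop : u + i = p + 1
  · by_cases hbig : ∃ t, p < t ∧ 0 < np t
    · -- case P5: move up to the next larger part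
      obtain ⟨t0, ht0p, ht0⟩ := hbig
      obtain ⟨q, hq1, hq2, hqmin⟩ := exists_min_part np ht0p ht0
      have hcons : ∀ t, p < t → t < q → ¬ IsPart np t := fun t h1 h2 hpart =>
        absurd (hqmin t hpart.2 h1) (by omega)
      have hqmy := hqmin py
      refine ⟨(u + (q - p), q, 1), ?_, cov_le (Or.inr (Or.inl
        ⟨p, q, u, hpp, ⟨by omega, hq1⟩, hq2, hcons, hu1, by omega, rfl, rfl⟩)), ?_, ?_⟩
      · rw [mem_S]; omega
      · rw [klt_def]; omega
      · rw [klt_def]; omega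
    · -- case MAX: x is the largest element, contradiction
      exfalso
      have hnb : ∀ t, p < t → np t = 0 := by
        intro t ht; by_contra hcc; exact hbig ⟨t, ht, by omega⟩
      have h8 := hnb py
      omega
  have hnt : u + i ≤ p := by omega
  by_cases hpa : p = a ∨ p = a+1
  · rcases hpa with rfl | rfl
    · -- p = a
      by_cases hA1 : 0 < np (p+1)
      · -- case P3: step right and up to part p+1 = a+1
        have hpart1 : IsPart np (p+1) := ⟨by omega, hA1⟩
        have he : ((u+1 : ℕ), p+1, 1) = ((u + (p+1-p) : ℕ), p+1, 1) := by
          have h : u + (p+1-p) = u+1 := by omega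
          rw [h]
        refine ⟨(u+1, p+1, 1), ?_, cov_le (Or.inr (Or.inl
          ⟨p, p+1, u, hpp, hpart1, by omega, fun t h1 h2 => absurd h1 (by omega),
            hu1, by omega, rfl, he⟩)), ?_, ?_⟩
        · rw [mem_S]; omega
        · rw [klt_def]; omega
        · rw [klt_def]; omega
      · -- case P4: step right within part p = a
        refine ⟨(u+1, p, 1), ?_, stepU np hpp hu1 (by omega), ?_, ?_⟩
        · rw [mem_S]; omega
        · rw [klt_def]; omega
        · rw [klt_def]; omega
    · -- p = a + 1
      by_cases hA : 0 < np a
      · -- case P1: step down to part a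
        have hpartA : IsPart np a := ⟨by omega, hA⟩
        refine ⟨(u, a, 1), ?_, cov_le (Or.inl
          ⟨a+1, a, u, hpp, hpartA, by omega, fun t h1 h2 => absurd h1 (by omega),
            hu1, by omega, rfl, rfl⟩), ?_, ?_⟩
        · rw [mem_S]; omega
        · rw [klt_def]; omega
        · rw [klt_def]; omega
      · -- case P2: step right within part a+1
        refine ⟨(u+1, a+1, 1), ?_, stepU np hpp hu1 (by omega), ?_, ?_⟩
        · rw [mem_S]; omega
        · rw [klt_def]; omega
        · rw [klt_def]; omega
  · -- p > a+1 and u = i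
    have hpgt : a + 1 < p := by omega
    have hui : u = i := by omega
    subst hui
    by_cases hmid : ∃ t, a ≤ t ∧ t < p ∧ 0 < np t
    · -- case P6: step down to the largest part below p
      obtain ⟨t0, ht1, ht2, ht3⟩ := hmid
      obtain ⟨q, hq1, hq2, hqmax⟩ := exists_max_part np ht2 ht3
      have hqa : a ≤ q := le_trans ht1 (hqmax t0 ht3 ht2)
      have hcons : ∀ t, q < t → t < p → ¬ IsPart np t := fun t h1 h2 hpart =>
        absurd (hqmax t hpart.2 h2) (by omega)
      have hqmy := hqmax py
      refine ⟨(u, q, 1), ?_, cov_le (Or.inl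
        ⟨p, q, u, hpp, ⟨by omega, hq1⟩, hq2, hcons, hu1, by omega, rfl, rfl⟩), ?_, ?_⟩
      · rw [mem_S]; omega
      · rw [klt_def]; omega
      · rw [klt_def]; omega
    · -- case P7: climb within part p to the right edge
      have hnone : ∀ t, a ≤ t → t < p → np t = 0 := fun t h1 h2 => by
        by_contra hcc; exact hmid ⟨t, h1, h2, by omega⟩
      have h10 := hnone py
      refine ⟨(p+1-u, p, 1), ?_, climb np hpp hu1 (p+1-u) (by omega) (by omega), ?_, ?_⟩
      · rw [mem_S]; omega
      · rw [klt_def]; omega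
      · rw [klt_def]; omega

end UchainAux
namespace UchainAux

def mvtx (M K : ℕ) (v : Vtx) : ℕ := v.1 * (M*K) + (M - v.2.1) * K + v.2.2

lemma m_lt {M K u p k u' p' k' : ℕ} (h1 : 1 ≤ p) (h2 : p < M) (h3 : k < K)
    (h1' : 1 ≤ p') (h2' : p' < M) (h3' : k' < K)
    (h : klt (u,p,k) (u',p',k')) :
    mvtx M K (u,p,k) < mvtx M K (u',p',k') := by
  rw [klt_def] at h
  show u * (M*K) + (M - p)*K + k < u' * (M*K) + (M - p')*K + k'
  rcases h with h | ⟨rfl, h | ⟨rfl, h⟩⟩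
  · have e2 : ((M-p)+1)*K ≤ M*K := Nat.mul_le_mul_right K (by omega)
    have e3 : ((M-p)+1)*K = (M-p)*K + K := by ring
    have e4 : (u+1) * (M*K) ≤ u' * (M*K) := Nat.mul_le_mul_right (M*K) (by omega)
    have e5 : (u+1) * (M*K) = u * (M*K) + M*K := by ring
    omega
  · have e1 : ((M-p)+1)*K ≤ (M - p')*K := Nat.mul_le_mul_right K (by omega)
    have e3 : ((M-p)+1)*K = (M-p)*K + K := by ring
    omega
  · omega

lemma chain_comp (np : ℕ →₀ ℕ) (h0 : np 0 = 0) {i a : ℕ} (hi : 1 ≤ i) (hia : 2*i ≤ a + 1) :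
    ∀ x ∈ Sset np i a, ∀ y ∈ Sset np i a, klt x y → leD np x y := by
  set M := np.support.sup id + 2 with hM
  set K := np.support.sup np + 2 with hK
  have hbound : ∀ v ∈ Sset np i a, 1 ≤ v.2.1 ∧ v.2.1 < M ∧ v.2.2 < K := by
    intro v hv
    obtain ⟨u', p', k'⟩ := v
    rw [mem_S] at hv
    have hmem : p' ∈ np.support := Finsupp.mem_support_iff.mpr (by omega)
    have b1 : p' ≤ np.support.sup id := Finset.le_sup (f := id) hmem
    have b2 : np p' ≤ np.support.sup np := Finset.le_sup hmem
    show 1 ≤ p' ∧ p' < M ∧ k' < K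
    omega
  have key : ∀ d x, x ∈ Sset np i a → ∀ y, y ∈ Sset np i a → klt x y →
      mvtx M K y - mvtx M K x ≤ d → leD np x y := by
    intro d
    induction d with
    | zero =>
      intro x hx y hy hxy hle
      exfalso
      obtain ⟨xu,xp,xk⟩ := x; obtain ⟨yu,yp,yk⟩ := y
      have b1 : 1 ≤ xp ∧ xp < M ∧ xk < K := hbound _ hx
      have b2 : 1 ≤ yp ∧ yp < M ∧ yk < K := hbound _ hy
      have m1 := m_lt (M := M) (K := K) b1.1 b1.2.1 b1.2.2 b2.1 b2.2.1 b2.2.2 hxy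
      omega
    | succ d ih =>
      intro x hx y hy hxy hle
      obtain ⟨z, hz, hxz, hkxz, hnyz⟩ := succ_step np h0 hi hia hx hy hxy
      rcases klt_total hnyz with hzy | rfl
      · refine hxz.trans (ih z hz y hy hzy ?_)
        obtain ⟨xu,xp,xk⟩ := x; obtain ⟨yu,yp,yk⟩ := y; obtain ⟨zu,zp,zk⟩ := z
        have b1 : 1 ≤ xp ∧ xp < M ∧ xk < K := hbound _ hx
        have b2 : 1 ≤ yp ∧ yp < M ∧ yk < K := hbound _ hy
        have b3 : 1 ≤ zp ∧ zp < M ∧ zk < K := hbound _ hz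
        have m1 := m_lt (M := M) (K := K) b1.1 b1.2.1 b1.2.2 b3.1 b3.2.1 b3.2.2 hkxz
        have m2 := m_lt (M := M) (K := K) b3.1 b3.2.1 b3.2.2 b2.1 b2.2.1 b2.2.2 hzy
        omega
      · exact hxz
  intro x hx y hy hxy
  exact key (mvtx M K y - mvtx M K x) x hx y hy hxy le_rfl

end UchainAux
/-- each set `S_i` in the definition of the `r`-`U`-chain
`U_{a_1,…,a_r}` is a chain in the poset `D_P`, and `S_i ∩ S_j = ∅` for `i ≠ j`. -/
theorem sset_isChain_and_disjoint
    (n : ℕ) (hn : 0 < n) (np : ℕ →₀ ℕ) (hP : IsPartitionOf n np)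
    (r : ℕ) (hr : 1 ≤ r) (a : ℕ → ℕ) (ha : ValidSeq a r) :
    (∀ i, 1 ≤ i → i ≤ r → IsChainD np (Sset np i (a i))) ∧
    (∀ i j, 1 ≤ i → i ≤ r → 1 ≤ j → j ≤ r → i ≠ j →
      Sset np i (a i) ∩ Sset np j (a j) = ∅) := by
  obtain ⟨h0, -⟩ := hP
  have hlow : ∀ j, 1 ≤ j → j ≤ r → 2*j ≤ a j + 1 := by
    intro j
    induction j with
    | zero => intro h1 h2; omega
    | succ m ih =>
      intro h1 h2
      by_cases hm : m = 0
      · subst hm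
        have := ha.1 (0+1) le_rfl h2
        omega
      · have h3 := ih (by omega) (by omega)
        have h4 := ha.2 m (by omega) (by omega)
        omega
  have hmono : ∀ i j, 1 ≤ i → i < j → j ≤ r → a i + 2 ≤ a j := by
    intro i j h1
    induction j with
    | zero => intro h2 h3; omega
    | succ m ih =>
      intro h2 h3
      by_cases hm : i = m
      · subst hm; exact ha.2 i h1 (by omega)
      · have h4 := ih (by omega) (by omega)
        have h5 := ha.2 m (by omega) (by omega)
        omega
  constructor
  · intro j h1 h2
    refine ⟨fun v hv => hv.1, ?_⟩
    intro x hx y hy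
    rcases UchainAux.klt_tri x y with h | rfl | h
    · exact Or.inl (UchainAux.chain_comp np h0 h1 (hlow j h1 h2) x hx y hy h)
    · exact Or.inl Relation.ReflTransGen.refl
    · exact Or.inr (UchainAux.chain_comp np h0 h1 (hlow j h1 h2) y hy x hx h)
  · have key : ∀ i j, 1 ≤ i → i < j → j ≤ r →
        Sset np i (a i) ∩ Sset np j (a j) = ∅ := by
      intro i j h1 h2 h3
      rw [Set.eq_empty_iff_forall_notMem]
      rintro ⟨u, p, k⟩ ⟨hvi, hvj⟩
      rw [UchainAux.mem_S] at hvi hvj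
      have hm := hmono i j h1 h2 h3
      have hl := hlow j (by omega) h3
      omega
    intro i j h1 h2 h3 h4 hne
    rcases Nat.lt_or_ge i j with h | h
    · exact key i j h1 h h4
    · rw [Set.inter_comm]; exact key j i h3 (by omega) h2
end

section
/- Let P be a partition of a positive integer n and let a_1 < a_2 < … < a_r be positive integers with a_{i+1} ≥ a_i + 2 for 1 ≤ i < r. Then the cardinality of the r-U-chain U_{a_1,…,a_r} in D_P equals Σ_{i=1}^{r} [ (a_i − 2i + 2)·n_{a_i} + (a_i − 2i + 3)·n_{a_i+1} + 2·Σ_{p > a_i+1} n_p ]. -/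
/-!
Each `S_i` is a finite union of blocks `U × {p} × [1, n_p]`: the rows `i ≤ u ≤ p + 1 - i` in
the parts `p = a_i, a_i + 1`, and the two columns `u = i`, `u = p + 1 - i` in every part
`p > a_i + 1`; the columns are distinct because `a_i ≥ 2i - 1`. Counting blocks gives the
`i`-th summand. The `S_i` are pairwise disjoint: for `i < j` every vertex of `S_j` lies in a
part `p ≥ a_j > a_i + 1`, where `S_i` only meets the columns `i` and `p + 1 - i`, both outside
`[j, p + 1 - j]`.
-/

def rowBlock (np : ℕ →₀ ℕ) (us : Finset ℕ) (p : ℕ) : Finset Vtx :=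
  us ×ˢ ({p} ×ˢ Finset.Icc 1 (np p))

lemma mem_rowBlock {np : ℕ →₀ ℕ} {us : Finset ℕ} {p : ℕ} {v : Vtx} :
    v ∈ rowBlock np us p ↔ v.1 ∈ us ∧ v.2.1 = p ∧ 1 ≤ v.2.2 ∧ v.2.2 ≤ np p := by
  simp only [rowBlock, Finset.mem_product, Finset.mem_singleton, Finset.mem_Icc]

lemma card_rowBlock (np : ℕ →₀ ℕ) (us : Finset ℕ) (p : ℕ) :
    (rowBlock np us p).card = us.card * np p := by
  simp [rowBlock]

lemma disjoint_rowBlock {np : ℕ →₀ ℕ} {us us' : Finset ℕ} {p p' : ℕ} (h : p ≠ p') :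
    Disjoint (rowBlock np us p) (rowBlock np us' p') :=
  Finset.disjoint_left.2 fun _ hv hv' =>
    h ((mem_rowBlock.1 hv).2.1.symm.trans (mem_rowBlock.1 hv').2.1)

def ssetFinset (np : ℕ →₀ ℕ) (i a : ℕ) : Finset Vtx :=
  rowBlock np (Finset.Icc i (a + 1 - i)) a ∪ rowBlock np (Finset.Icc i (a + 2 - i)) (a + 1) ∪
    (np.support.filter (fun p => a + 1 < p)).biUnion fun p => rowBlock np {i, p + 1 - i} p

lemma mem_ssetFinset {np : ℕ →₀ ℕ} {i a : ℕ} {v : Vtx} :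
    v ∈ ssetFinset np i a ↔ 1 ≤ v.2.2 ∧ v.2.2 ≤ np v.2.1 ∧
      ((v.2.1 = a ∧ i ≤ v.1 ∧ v.1 ≤ a + 1 - i) ∨ (v.2.1 = a + 1 ∧ i ≤ v.1 ∧ v.1 ≤ a + 2 - i) ∨
        (a + 1 < v.2.1 ∧ (v.1 = i ∨ v.1 = v.2.1 + 1 - i))) := by
  obtain ⟨u, p, k⟩ := v
  simp only [ssetFinset, Finset.mem_union, Finset.mem_biUnion, Finset.mem_filter,
    Finsupp.mem_support_iff, mem_rowBlock, Finset.mem_Icc, Finset.mem_insert, Finset.mem_singleton]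
  constructor
  · rintro ((⟨hu, rfl, hk⟩ | ⟨hu, rfl, hk⟩) | ⟨q, ⟨-, hq⟩, hu, rfl, hk⟩) <;> tauto
  · rintro ⟨hk1, hk2, ⟨rfl, hu⟩ | ⟨rfl, hu⟩ | ⟨hp, hu⟩⟩
    · tauto
    · tauto
    · exact Or.inr ⟨p, ⟨by omega, by omega⟩, hu, rfl, hk1, hk2⟩

lemma coe_ssetFinset (np : ℕ →₀ ℕ) {i a : ℕ} (hi : 1 ≤ i) (hia : 2 * i ≤ a + 1) :
    (ssetFinset np i a : Set Vtx) = Sset np i a := by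
  ext ⟨u, p, k⟩
  simp only [Finset.mem_coe, mem_ssetFinset, Sset, vertexSet, Set.mem_ofPred_eq]
  omega

lemma card_ssetFinset (np : ℕ →₀ ℕ) {i a : ℕ} (hia : 2 * i ≤ a + 1) :
    (ssetFinset np i a).card =
      (a + 2 - 2 * i) * np a + (a + 3 - 2 * i) * np (a + 1) +
        2 * ∑ p ∈ np.support.filter (fun p => a + 1 < p), np p := by
  have hdisj : Disjoint (rowBlock np (Finset.Icc i (a + 1 - i)) a ∪
      rowBlock np (Finset.Icc i (a + 2 - i)) (a + 1))
      ((np.support.filter (fun p => a + 1 < p)).biUnion fun p => rowBlock np {i, p + 1 - i} p) := by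
    simp only [Finset.disjoint_biUnion_right, Finset.disjoint_union_left, Finset.mem_filter]
    exact fun p hp => ⟨disjoint_rowBlock (by omega), disjoint_rowBlock (by omega)⟩
  rw [ssetFinset, Finset.card_union_of_disjoint hdisj,
    Finset.card_union_of_disjoint (disjoint_rowBlock (by omega)), Finset.card_biUnion,
    card_rowBlock, card_rowBlock, Nat.card_Icc, Nat.card_Icc, Finset.mul_sum]
  · have hcols : ∀ p ∈ np.support.filter (fun p => a + 1 < p),
        (rowBlock np {i, p + 1 - i} p).card = 2 * np p := fun p hp => by
      rw [Finset.mem_filter] at hp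
      rw [card_rowBlock, Finset.card_pair (by omega)]
    rw [Finset.sum_congr rfl hcols, show a + 1 - i + 1 - i = a + 2 - 2 * i by omega,
      show a + 2 - i + 1 - i = a + 3 - 2 * i by omega]
  · exact fun p _ q _ hpq => disjoint_rowBlock hpq

lemma disjoint_ssetFinset (np : ℕ →₀ ℕ) {i j a b : ℕ} (hij : i < j) (hj : 2 * j ≤ b + 1)
    (hab : a + 2 ≤ b) : Disjoint (ssetFinset np i a) (ssetFinset np j b) := by
  refine Finset.disjoint_left.2 fun v hi hj => ?_
  rw [mem_ssetFinset] at hi hj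
  omega

namespace ValidSeq

variable {a : ℕ → ℕ} {r : ℕ}

lemma add_two_mul_sub_le (ha : ValidSeq a r) {i j : ℕ} (hi : 1 ≤ i) (hij : i ≤ j) (hj : j ≤ r) :
    a i + 2 * (j - i) ≤ a j := by
  induction j, hij using Nat.le_induction with
  | base => simp
  | succ j hij ih =>
    have := ha.2 j (by omega) (by omega)
    have := ih (by omega)
    omega

lemma two_mul_le (ha : ValidSeq a r) {i : ℕ} (hi : 1 ≤ i) (hir : i ≤ r) : 2 * i ≤ a i + 1 := by
  have := ha.add_two_mul_sub_le le_rfl hi hir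
  have := ha.1 1 le_rfl (hi.trans hir)
  omega

lemma add_two_le (ha : ValidSeq a r) {i j : ℕ} (hi : 1 ≤ i) (hij : i < j) (hj : j ≤ r) :
    a i + 2 ≤ a j := by
  have := ha.add_two_mul_sub_le hi hij.le hj
  omega

end ValidSeq

lemma UChain_eq_coe_biUnion {np : ℕ →₀ ℕ} {a : ℕ → ℕ} {r : ℕ} (ha : ValidSeq a r) :
    UChain np a r = ↑((Finset.Icc 1 r).biUnion fun i => ssetFinset np i (a i)) := by
  rw [UChain, Finset.coe_biUnion, ← Finset.coe_Icc]
  refine Set.iUnion₂_congr fun i hi => ?_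
  rw [Finset.mem_coe, Finset.mem_Icc] at hi
  exact (coe_ssetFinset np hi.1 (ha.two_mul_le hi.1 hi.2)).symm

theorem card_UChain_general
    (np : ℕ →₀ ℕ)
    (r : ℕ) (a : ℕ → ℕ) (ha : ValidSeq a r) :
    (UChain np a r).ncard =
      ∑ i ∈ Finset.Icc 1 r,
        ((a i + 2 - 2 * i) * np (a i) + (a i + 3 - 2 * i) * np (a i + 1) +
          2 * ∑ p ∈ np.support.filter (fun p => a i + 1 < p), np p) := by
  rw [UChain_eq_coe_biUnion ha, Set.ncard_coe_finset, Finset.card_biUnion]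
  · refine Finset.sum_congr rfl fun i hi => ?_
    rw [Finset.mem_Icc] at hi
    exact card_ssetFinset np (ha.two_mul_le hi.1 hi.2)
  · intro i hi j hj hij
    rw [Finset.coe_Icc, Set.mem_Icc] at hi hj
    rcases hij.lt_or_gt with h | h
    · exact disjoint_ssetFinset np h (ha.two_mul_le hj.1 hj.2) (ha.add_two_le hi.1 h hj.2)
    · exact (disjoint_ssetFinset np h (ha.two_mul_le hi.1 hi.2) (ha.add_two_le hj.1 h hi.2)).symm

/-- `|U_{a_1,…,a_r}| = Σ_{i=1}^r ((a_i − 2i + 2)·n_{a_i}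
+ (a_i − 2i + 3)·n_{a_i+1} + 2·Σ_{p>a_i+1} n_p)`. -/
theorem card_UChain
    (n : ℕ) (hn : 0 < n) (np : ℕ →₀ ℕ) (hP : IsPartitionOf n np)
    (r : ℕ) (hr : 1 ≤ r) (a : ℕ → ℕ) (ha : ValidSeq a r) :
    (UChain np a r).ncard =
      ∑ i ∈ Finset.Icc 1 r,
        ((a i + 2 - 2 * i) * np (a i) + (a i + 3 - 2 * i) * np (a i + 1) +
          2 * ∑ p ∈ np.support.filter (fun p => a i + 1 < p), np p) :=
  card_UChain_general np r a ha
end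

section
/- Let n > 1 and let P be a partition of n. Let a_1 < a_2 < … < a_r be positive integers with a_{j+1} ≥ a_j + 2 for 1 ≤ j < r, and fix i ∈ {1, …, r}. Let U_{a_1,…,â_i,…,a_r} denote the (r−1)-U-chain in D_P associated to the sequence a_1, …, a_{i−1}, a_{i+1}, …, a_r. Then |U_{a_1,…,a_r}| = |U_{a_1,…,â_i,…,a_r}| + |U_{a_i}| − 2(i−1)(n_{a_i} + n_{a_i+1}) − 2·Σ_{j=i+1}^{r} (n_{a_j} + n_{a_j+1}). -/
namespace CardUChainAux

/-- Explicit finite-set model of `Sset np i a`. -/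
def Fset (np : ℕ →₀ ℕ) (i a : ℕ) : Finset Vtx :=
  ((Finset.Icc i (a + 1 - i)) ×ˢ ({a} : Finset ℕ) ×ˢ Finset.Icc 1 (np a)) ∪
    ((Finset.Icc i (a + 2 - i)) ×ˢ ({a + 1} : Finset ℕ) ×ˢ Finset.Icc 1 (np (a + 1))) ∪
    (np.support.filter (fun p => a + 1 < p)).biUnion
      (fun p => ({i, p + 1 - i} : Finset ℕ) ×ˢ ({p} : Finset ℕ) ×ˢ Finset.Icc 1 (np p))

lemma mem_Fset {np : ℕ →₀ ℕ} {i a : ℕ} {v : Vtx} :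
    v ∈ Fset np i a ↔
      ((v.2.1 = a ∧ i ≤ v.1 ∧ v.1 ≤ a + 1 - i ∧ 1 ≤ v.2.2 ∧ v.2.2 ≤ np a) ∨
        (v.2.1 = a + 1 ∧ i ≤ v.1 ∧ v.1 ≤ a + 2 - i ∧ 1 ≤ v.2.2 ∧ v.2.2 ≤ np (a + 1)) ∨
        (a + 1 < v.2.1 ∧ (v.1 = i ∨ v.1 = v.2.1 + 1 - i) ∧ 1 ≤ v.2.2 ∧ v.2.2 ≤ np v.2.1)) := by
  obtain ⟨u, p, k⟩ := v
  simp only [Fset, Finset.mem_union, Finset.mem_product, Finset.mem_Icc, Finset.mem_singleton,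
    Finset.mem_biUnion, Finset.mem_filter, Finsupp.mem_support_iff, Finset.mem_insert]
  constructor
  · rintro ((⟨h1, h2, h3⟩ | ⟨h1, h2, h3⟩) | ⟨q, ⟨hq1, hq2⟩, h1, h2, h3⟩)
    · exact Or.inl ⟨h2, h1.1, h1.2, h3.1, h3.2⟩
    · exact Or.inr (Or.inl ⟨h2, h1.1, h1.2, h3.1, h3.2⟩)
    · subst h2
      exact Or.inr (Or.inr ⟨hq2, h1, h3.1, h3.2⟩)
  · rintro (⟨h1, h2, h3, h4, h5⟩ | ⟨h1, h2, h3, h4, h5⟩ | ⟨h1, h2, h3, h4⟩)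
    · exact Or.inl (Or.inl ⟨⟨h2, h3⟩, h1, h4, h5⟩)
    · exact Or.inl (Or.inr ⟨⟨h2, h3⟩, h1, h4, h5⟩)
    · exact Or.inr ⟨p, ⟨by omega, h1⟩, h2, rfl, h3, h4⟩

lemma Sset_eq_Fset (np : ℕ →₀ ℕ) (i a : ℕ) (h1 : 1 ≤ i) (h2 : 2 * i ≤ a + 1) :
    Sset np i a = ↑(Fset np i a) := by
  ext ⟨u, p, k⟩
  simp only [Sset, vertexSet, Set.mem_setOf_eq, Finset.mem_coe, mem_Fset]
  constructor
  · rintro ⟨⟨hu1, hup, hk1, hk2⟩, ⟨hp | hp, hui, huip⟩ | ⟨hp, harm⟩⟩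
    · subst hp; exact Or.inl ⟨rfl, hui, by omega, hk1, hk2⟩
    · subst hp; exact Or.inr (Or.inl ⟨rfl, hui, by omega, hk1, hk2⟩)
    · exact Or.inr (Or.inr ⟨hp, by omega, hk1, hk2⟩)
  · rintro (⟨hp, h3, h4, h5, h6⟩ | ⟨hp, h3, h4, h5, h6⟩ | ⟨hp, h3, h5, h6⟩)
    · subst hp; exact ⟨⟨by omega, by omega, h5, h6⟩, Or.inl ⟨Or.inl rfl, h3, by omega⟩⟩
    · subst hp; exact ⟨⟨by omega, by omega, h5, h6⟩, Or.inl ⟨Or.inr rfl, h3, by omega⟩⟩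
    · exact ⟨⟨by omega, by omega, h5, h6⟩, Or.inr ⟨hp, by omega⟩⟩

lemma card_Fset (np : ℕ →₀ ℕ) (i a : ℕ) (h1 : 1 ≤ i) (h2 : 2 * i ≤ a + 1) :
    ((Fset np i a).card : ℤ) =
      ((a : ℤ) + 2 - 2 * i) * np a + ((a : ℤ) + 3 - 2 * i) * np (a + 1) +
        2 * ∑ p ∈ np.support.filter (fun p => a + 1 < p), (np p : ℤ) := by
  have hd1 : Disjoint
      ((Finset.Icc i (a + 1 - i)) ×ˢ ({a} : Finset ℕ) ×ˢ Finset.Icc 1 (np a))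
      ((Finset.Icc i (a + 2 - i)) ×ˢ ({a + 1} : Finset ℕ) ×ˢ Finset.Icc 1 (np (a + 1))) := by
    rw [Finset.disjoint_left]
    rintro ⟨u, p, k⟩ hx hy
    simp only [Finset.mem_product, Finset.mem_singleton] at hx hy
    omega
  have hd2 : Disjoint
      (((Finset.Icc i (a + 1 - i)) ×ˢ ({a} : Finset ℕ) ×ˢ Finset.Icc 1 (np a)) ∪
        ((Finset.Icc i (a + 2 - i)) ×ˢ ({a + 1} : Finset ℕ) ×ˢ Finset.Icc 1 (np (a + 1))))
      ((np.support.filter (fun p => a + 1 < p)).biUnion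
        (fun p => ({i, p + 1 - i} : Finset ℕ) ×ˢ ({p} : Finset ℕ) ×ˢ Finset.Icc 1 (np p))) := by
    rw [Finset.disjoint_left]
    rintro ⟨u, p, k⟩ hx hy
    simp only [Finset.mem_union, Finset.mem_product, Finset.mem_singleton, Finset.mem_biUnion,
      Finset.mem_filter] at hx hy
    obtain ⟨q, ⟨_, hq⟩, _, hpq, _⟩ := hy
    omega
  have hdb : ∀ p ∈ np.support.filter (fun p => a + 1 < p),
      ∀ q ∈ np.support.filter (fun p => a + 1 < p), p ≠ q →
      Disjoint (({i, p + 1 - i} : Finset ℕ) ×ˢ ({p} : Finset ℕ) ×ˢ Finset.Icc 1 (np p))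
        (({i, q + 1 - i} : Finset ℕ) ×ˢ ({q} : Finset ℕ) ×ˢ Finset.Icc 1 (np q)) := by
    intro p hp q hq hpq
    rw [Finset.disjoint_left]
    rintro ⟨u, p', k⟩ hx hy
    simp only [Finset.mem_product, Finset.mem_singleton] at hx hy
    exact hpq (hx.2.1 ▸ hy.2.1 ▸ rfl)
  have cA : ((Finset.Icc i (a + 1 - i)) ×ˢ ({a} : Finset ℕ) ×ˢ Finset.Icc 1 (np a)).card
      = (a + 2 - 2 * i) * np a := by
    rw [Finset.card_product, Finset.card_product, Finset.card_singleton, Nat.card_Icc,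
      Nat.card_Icc]
    have e : a + 1 - i + 1 - i = a + 2 - 2 * i := by omega
    have e' : np a + 1 - 1 = np a := by omega
    rw [e, e', one_mul]
  have cB : ((Finset.Icc i (a + 2 - i)) ×ˢ ({a + 1} : Finset ℕ) ×ˢ Finset.Icc 1 (np (a + 1))).card
      = (a + 3 - 2 * i) * np (a + 1) := by
    rw [Finset.card_product, Finset.card_product, Finset.card_singleton, Nat.card_Icc,
      Nat.card_Icc]
    have e : a + 2 - i + 1 - i = a + 3 - 2 * i := by omega
    have e' : np (a + 1) + 1 - 1 = np (a + 1) := by omega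
    rw [e, e', one_mul]
  have hc : ∀ p ∈ np.support.filter (fun p => a + 1 < p),
      (({i, p + 1 - i} : Finset ℕ) ×ˢ ({p} : Finset ℕ) ×ˢ Finset.Icc 1 (np p)).card
        = 2 * np p := by
    intro p hp
    simp only [Finset.mem_filter] at hp
    rw [Finset.card_product, Finset.card_product, Finset.card_singleton, Nat.card_Icc,
      Finset.card_insert_of_notMem (by simp only [Finset.mem_singleton]; omega),
      Finset.card_singleton]
    have e' : np p + 1 - 1 = np p := by omega
    rw [e', one_mul]
  rw [Fset, Finset.card_union_of_disjoint hd2, Finset.card_union_of_disjoint hd1,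
    Finset.card_biUnion hdb, cA, cB, Finset.sum_congr rfl hc]
  have e1 : ((a + 2 - 2 * i : ℕ) : ℤ) = (a : ℤ) + 2 - 2 * i := by omega
  have e2 : ((a + 3 - 2 * i : ℕ) : ℤ) = (a : ℤ) + 3 - 2 * i := by omega
  push_cast
  rw [e1, e2, Finset.mul_sum]

lemma Sset_disjoint (np : ℕ →₀ ℕ) {i j ai aj : ℕ} (hij : i < j) (hj : 2 * j ≤ aj + 1)
    (hseq : ai + 2 ≤ aj) : Disjoint (Sset np i ai) (Sset np j aj) := by
  rw [Set.disjoint_left]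
  rintro ⟨u, p, k⟩ hx hy
  simp only [Sset, vertexSet, Set.mem_setOf_eq] at hx hy
  omega

lemma validSeq_ge {a : ℕ → ℕ} {r : ℕ} (ha : ValidSeq a r) :
    ∀ j, 1 ≤ j → j ≤ r → ∀ i, 1 ≤ i → i ≤ j → a i + 2 * (j - i) ≤ a j := by
  intro j
  induction j with
  | zero => omega
  | succ m ih =>
    intro _ hm i hi1 hij
    rcases Nat.eq_or_lt_of_le hij with h | h
    · subst h; omega
    · have h1 : a i + 2 * (m - i) ≤ a m := ih (by omega) (by omega) i hi1 (by omega)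
      have h2 : a m + 2 ≤ a (m + 1) := ha.2 m (by omega) (by omega)
      omega

lemma two_mul_le {a : ℕ → ℕ} {r : ℕ} (ha : ValidSeq a r) {j : ℕ} (hj1 : 1 ≤ j)
    (hjr : j ≤ r) : 2 * j ≤ a j + 1 := by
  have h1 := validSeq_ge ha j hj1 hjr 1 le_rfl hj1
  have h2 := ha.1 1 le_rfl (by omega)
  omega

/-- The `ℤ`-valued cardinality contribution of `S_j` for the value `c`. -/
def G (np : ℕ →₀ ℕ) (j c : ℕ) : ℤ :=
  ((c : ℤ) + 2 - 2 * j) * np c + ((c : ℤ) + 3 - 2 * j) * np (c + 1) +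
    2 * ∑ p ∈ np.support.filter (fun p => c + 1 < p), (np p : ℤ)

lemma UChain_eq (np : ℕ →₀ ℕ) (a : ℕ → ℕ) (r : ℕ) (ha : ValidSeq a r) :
    UChain np a r = ↑((Finset.Icc 1 r).biUnion fun j => Fset np j (a j)) := by
  ext v
  constructor
  · intro hv
    obtain ⟨j, hj, hv⟩ := Set.mem_iUnion₂.mp hv
    rw [Sset_eq_Fset np j (a j) hj.1 (two_mul_le ha hj.1 hj.2)] at hv
    exact Finset.mem_coe.mpr (Finset.mem_biUnion.mpr ⟨j, Finset.mem_Icc.mpr hj, hv⟩)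
  · intro hv
    obtain ⟨j, hj, hv⟩ := Finset.mem_biUnion.mp (Finset.mem_coe.mp hv)
    rw [Finset.mem_Icc] at hj
    exact Set.mem_iUnion₂.mpr
      ⟨j, hj, (Sset_eq_Fset np j (a j) hj.1 (two_mul_le ha hj.1 hj.2)) ▸ hv⟩

lemma card_UChain (np : ℕ →₀ ℕ) (a : ℕ → ℕ) (r : ℕ) (ha : ValidSeq a r) :
    ((UChain np a r).ncard : ℤ) = ∑ j ∈ Finset.Icc 1 r, G np j (a j) := by
  have hdis : ∀ x ∈ Finset.Icc 1 r, ∀ y ∈ Finset.Icc 1 r, x ≠ y →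
      Disjoint (Fset np x (a x)) (Fset np y (a y)) := by
    have key : ∀ x y, 1 ≤ x → y ≤ r → x < y →
        Disjoint (Fset np x (a x)) (Fset np y (a y)) := by
      intro x y hx1 hyr hxy
      rw [← Finset.disjoint_coe,
        ← Sset_eq_Fset np x (a x) hx1 (two_mul_le ha hx1 (by omega)),
        ← Sset_eq_Fset np y (a y) (by omega) (two_mul_le ha (by omega) hyr)]
      have hseq : a x + 2 ≤ a y := by
        have := validSeq_ge ha y (by omega) hyr x hx1 (by omega)
        omega
      exact Sset_disjoint np hxy (two_mul_le ha (by omega) hyr) hseq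
    intro x hx y hy hxy
    rw [Finset.mem_Icc] at hx hy
    rcases Nat.lt_or_ge x y with h | h
    · exact key x y hx.1 hy.2 h
    · exact (key y x hy.1 hx.2 (by omega)).symm
  rw [UChain_eq np a r ha, Set.ncard_coe_finset, Finset.card_biUnion hdis]
  push_cast
  refine Finset.sum_congr rfl fun j hj => ?_
  rw [Finset.mem_Icc] at hj
  rw [card_Fset np j (a j) hj.1 (two_mul_le ha hj.1 hj.2)]
  rfl

lemma ncard_Sset_one (np : ℕ →₀ ℕ) (c : ℕ) (hc : 1 ≤ c) :
    ((Sset np 1 c).ncard : ℤ) = G np 1 c := by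
  rw [Sset_eq_Fset np 1 c le_rfl (by omega), Set.ncard_coe_finset,
    card_Fset np 1 c le_rfl (by omega)]
  rfl

lemma G_tele (np : ℕ →₀ ℕ) {j : ℕ} (hj : 1 ≤ j) (c : ℕ) :
    G np j c = G np (j - 1) c - 2 * ((np c : ℤ) + np (c + 1)) := by
  have e : ((j - 1 : ℕ) : ℤ) = (j : ℤ) - 1 := by omega
  unfold G
  rw [e]; ring

lemma G_base (np : ℕ →₀ ℕ) (i c : ℕ) :
    G np i c = G np 1 c - 2 * ((i : ℤ) - 1) * ((np c : ℤ) + np (c + 1)) := by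
  unfold G; push_cast; ring

lemma icc_ioc (m : ℕ) : Finset.Icc 1 m = Finset.Ioc 0 m := by
  ext x; simp only [Finset.mem_Icc, Finset.mem_Ioc]; omega

end CardUChainAux

/-- Lemma 1.12: `|U_{a_1,…,a_r}| = |U_{a_1,…,â_i,…,a_r}| + |U_{a_i}|
− 2(i−1)(n_{a_i} + n_{a_i+1}) − 2·Σ_{j=i+1}^r (n_{a_j} + n_{a_j+1})`. -/
theorem card_UChain_delete_one
    (n : ℕ) (hn : 1 < n) (np : ℕ →₀ ℕ) (hP : IsPartitionOf n np)
    (r : ℕ) (a : ℕ → ℕ) (ha : ValidSeq a r) (i : ℕ) (hi1 : 1 ≤ i) (hir : i ≤ r) :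
    ((UChain np a r).ncard : ℤ) =
      ((UChain np (fun j => if j < i then a j else a (j + 1)) (r - 1)).ncard : ℤ)
        + ((Sset np 1 (a i)).ncard : ℤ)
        - 2 * ((i : ℤ) - 1) * ((np (a i) : ℤ) + (np (a i + 1) : ℤ))
        - 2 * ∑ j ∈ Finset.Icc (i + 1) r, ((np (a j) : ℤ) + (np (a j + 1) : ℤ)) := by
  open CardUChainAux in
  obtain ⟨i', rfl⟩ : ∃ i', i = i' + 1 := ⟨i - 1, by omega⟩
  obtain ⟨r', rfl⟩ : ∃ r', r = r' + 1 := ⟨r - 1, by omega⟩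
  have hir' : i' ≤ r' := by omega
  simp only [Nat.add_sub_cancel]
  have hb : ValidSeq (fun j => if j < i' + 1 then a j else a (j + 1)) r' := by
    constructor
    · intro j hj1 hjr
      simp only
      split_ifs with h
      · exact ha.1 j hj1 (by omega)
      · exact ha.1 (j + 1) (by omega) (by omega)
    · intro j hj1 hjr
      simp only
      split_ifs with h h'
      · exact ha.2 j hj1 (by omega)
      · have := validSeq_ge ha (j + 1 + 1) (by omega) (by omega) j hj1 (by omega)
        omega
      · omega
      · exact ha.2 (j + 1) (by omega) (by omega)
  rw [card_UChain np a (r' + 1) ha,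
    card_UChain np (fun j => if j < i' + 1 then a j else a (j + 1)) r' hb,
    ncard_Sset_one np (a (i' + 1)) (ha.1 (i' + 1) (by omega) (by omega))]
  have hIocSingle : Finset.Ioc i' (i' + 1) = {i' + 1} := by
    ext x; simp only [Finset.mem_Ioc, Finset.mem_singleton]; omega
  have splitL : ∑ j ∈ Finset.Icc 1 (r' + 1), G np j (a j)
      = (∑ j ∈ Finset.Ioc 0 i', G np j (a j)) + G np (i' + 1) (a (i' + 1))
        + ∑ j ∈ Finset.Ioc (i' + 1) (r' + 1), G np j (a j) := by
    rw [icc_ioc,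
      ← Finset.sum_Ioc_consecutive _ (Nat.zero_le i') (show i' ≤ r' + 1 by omega),
      ← Finset.sum_Ioc_consecutive _ (show i' ≤ i' + 1 by omega)
        (show i' + 1 ≤ r' + 1 by omega),
      hIocSingle, Finset.sum_singleton, add_assoc]
  have reidx : ∑ j ∈ Finset.Ioc (i' + 1) (r' + 1), G np (j - 1) (a j)
      = ∑ j ∈ Finset.Ioc i' r', G np j (a (j + 1)) := by
    rw [← Finset.map_add_right_Ioc i' r' 1, Finset.sum_map]
    refine Finset.sum_congr rfl fun j hj => ?_
    simp only [addRightEmbedding_apply, Nat.add_sub_cancel]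
  have splitR : ∑ j ∈ Finset.Icc 1 r',
        G np j ((fun j => if j < i' + 1 then a j else a (j + 1)) j)
      = (∑ j ∈ Finset.Ioc 0 i', G np j (a j))
        + ∑ j ∈ Finset.Ioc (i' + 1) (r' + 1), G np (j - 1) (a j) := by
    rw [icc_ioc, ← Finset.sum_Ioc_consecutive _ (Nat.zero_le i') hir', reidx]
    congr 1
    · refine Finset.sum_congr rfl fun j hj => ?_
      rw [Finset.mem_Ioc] at hj
      simp only [if_pos (show j < i' + 1 by omega)]
    · refine Finset.sum_congr rfl fun j hj => ?_
      rw [Finset.mem_Ioc] at hj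
      simp only [if_neg (show ¬ j < i' + 1 by omega)]
  have tele : ∑ j ∈ Finset.Ioc (i' + 1) (r' + 1), G np j (a j)
      = ∑ j ∈ Finset.Ioc (i' + 1) (r' + 1),
          (G np (j - 1) (a j) - 2 * ((np (a j) : ℤ) + np (a j + 1))) := by
    refine Finset.sum_congr rfl fun j hj => ?_
    rw [Finset.mem_Ioc] at hj
    exact G_tele np (by omega) (a j)
  have hIccIoc : Finset.Icc (i' + 1 + 1) (r' + 1) = Finset.Ioc (i' + 1) (r' + 1) := by
    ext x; simp only [Finset.mem_Icc, Finset.mem_Ioc]; omega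
  rw [splitL, splitR, tele, Finset.sum_sub_distrib, hIccIoc,
    G_base np (i' + 1) (a (i' + 1)), ← Finset.mul_sum]
  push_cast
  ring
end

section
/- Let P be a partition of a positive integer n, let b_1 < b_2 < … < b_r be positive integers with b_{i+1} ≥ b_i + 2 for 1 ≤ i < r, and let a be a positive integer with a ≤ b_1. Then the sequence a, b_2, …, b_r defines an r-U-chain in D_P and, as integers, |U_{a,b_2,…,b_r}| − |U_{b_1,b_2,…,b_r}| = |U_a| − |U_{b_1}|. -/
lemma vertexSet_finite (np : ℕ →₀ ℕ) : (vertexSet np).Finite := by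
  apply Set.Finite.subset
    (Set.finite_Icc ((1:ℕ),(1:ℕ),(1:ℕ)) (np.support.sup id, np.support.sup id, np.support.sup np))
  rintro ⟨u, p, k⟩ ⟨h1, h2, h3, h4⟩
  dsimp only at h1 h2 h3 h4
  have hps : p ∈ np.support := Finsupp.mem_support_iff.2 (by omega)
  have hp : p ≤ np.support.sup id := Finset.le_sup (f := id) hps
  have hk : np p ≤ np.support.sup np := Finset.le_sup hps
  simp only [Set.mem_Icc, Prod.le_def]
  exact ⟨⟨h1, by omega, h3⟩, ⟨by omega, hp, by omega⟩⟩

lemma Sset_finite (np : ℕ →₀ ℕ) (i a : ℕ) : (Sset np i a).Finite :=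
  (vertexSet_finite np).subset (fun v hv => hv.1)

/-- Case 1 of Proposition 1.13: if `a ≤ b_1` then `a, b_2, …, b_r`
defines an `r`-`U`-chain and `|U_{a,b_2,…,b_r}| − |U_{b_1,…,b_r}| = |U_a| − |U_{b_1}|`. -/
theorem replacement_case_one
    (n : ℕ) (hn : 0 < n) (np : ℕ →₀ ℕ) (hP : IsPartitionOf n np)
    (r : ℕ) (hr : 1 ≤ r) (b : ℕ → ℕ) (hb : ValidSeq b r)
    (a : ℕ) (ha : 1 ≤ a) (hab : a ≤ b 1) :
    ValidSeq (fun j => if j = 1 then a else b j) r ∧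
    ((UChain np (fun j => if j = 1 then a else b j) r).ncard : ℤ)
        - ((UChain np b r).ncard : ℤ)
      = ((Sset np 1 a).ncard : ℤ) - ((Sset np 1 (b 1)).ncard : ℤ) := by
  obtain ⟨hbpos, hbstep⟩ := hb
  have hmono : ∀ i, 2 ≤ i → i ≤ r → b 1 + 2 ≤ b i := by
    intro i h2 hir
    induction i with
    | zero => omega
    | succ j ih =>
      rcases Nat.lt_or_ge j 2 with hj | hj
      · have hj1 : j = 1 := by omega
        subst hj1
        exact hbstep 1 le_rfl (by omega)
      · have h1 := hbstep j (by omega) (by omega)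
        have h2 := ih (by omega) (by omega)
        omega
  constructor
  · constructor
    · intro i h1 hir
      by_cases h : i = 1
      · simp only [h, if_pos rfl]; exact ha
      · simp only [if_neg h]; exact hbpos i h1 hir
    · intro i h1 hir
      have h2 : ¬ (i + 1 = 1) := by omega
      by_cases h : i = 1
      · subst h
        have := hmono 2 le_rfl (by omega)
        simp only [if_neg h2]
        norm_num
        omega
      · simp only [if_neg h, if_neg h2]
        exact hbstep i h1 hir
  · set T : Set Vtx := ⋃ i ∈ Set.Icc 2 r, Sset np i (b i) with hTdef
    have hIcc : Set.Icc 1 r = insert 1 (Set.Icc 2 r) := by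
      ext i; simp only [Set.mem_Icc, Set.mem_insert_iff]; omega
    have hU1 : UChain np b r = Sset np 1 (b 1) ∪ T := by
      rw [UChain, hIcc, Set.biUnion_insert]
    have hU2 : UChain np (fun j => if j = 1 then a else b j) r = Sset np 1 a ∪ T := by
      rw [UChain, hIcc, Set.biUnion_insert]
      simp only [if_pos rfl]
      congr 1
      apply Set.iUnion₂_congr
      intro i hi
      have : i ≠ 1 := by
        simp only [Set.mem_Icc] at hi; omega
      rw [if_neg this]
    have hT : ∀ v ∈ T, b 1 + 1 < v.2.1 := by
      intro v hv
      simp only [hTdef, Set.mem_iUnion, Set.mem_Icc] at hv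
      obtain ⟨i, hi, hvx, hcond⟩ := hv
      have hbi := hmono i hi.1 hi.2
      rcases hcond with ⟨hp, _⟩ | ⟨hp, _⟩ <;> omega
    have hinter : Sset np 1 a ∩ T = Sset np 1 (b 1) ∩ T := by
      ext v
      constructor
      · rintro ⟨⟨hvx, hcond⟩, ht⟩
        have hp := hT v ht
        refine ⟨⟨hvx, ?_⟩, ht⟩
        rcases hcond with ⟨h1, _⟩ | ⟨h1, h2⟩
        · omega
        · exact Or.inr ⟨by omega, h2⟩
      · rintro ⟨⟨hvx, hcond⟩, ht⟩
        have hp := hT v ht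
        refine ⟨⟨hvx, ?_⟩, ht⟩
        rcases hcond with ⟨h1, _⟩ | ⟨h1, h2⟩
        · omega
        · exact Or.inr ⟨by omega, h2⟩
    have hfa : (Sset np 1 a).Finite := Sset_finite np 1 a
    have hfb : (Sset np 1 (b 1)).Finite := Sset_finite np 1 (b 1)
    have hfT : T.Finite := by
      apply Set.Finite.biUnion (Set.finite_Icc 2 r)
      intro i _
      exact Sset_finite np i (b i)
    have e1 : (Sset np 1 a ∪ T).ncard + (Sset np 1 a ∩ T).ncard
        = (Sset np 1 a).ncard + T.ncard :=
      Set.ncard_union_add_ncard_inter _ _ hfa hfT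
    have e2 : (Sset np 1 (b 1) ∪ T).ncard + (Sset np 1 (b 1) ∩ T).ncard
        = (Sset np 1 (b 1)).ncard + T.ncard :=
      Set.ncard_union_add_ncard_inter _ _ hfb hfT
    rw [hU1, hU2, hinter] at *
    omega
end

section
/- Let P be a partition of a positive integer n, let b_1 < b_2 < … < b_r be positive integers with b_{i+1} ≥ b_i + 2 for 1 ≤ i < r, let u ∈ {1, …, r−1}, and let a be a positive integer with b_u + 2 ≤ a and b_{u+1} = a + 1. Then the sequence b_1, …, b_u, a, b_{u+2}, …, b_r defines an r-U-chain in D_P and, as integers, |U_{b_1,…,b_u,a,b_{u+2},…,b_r}| − |U_{b_1,…,b_r}| = (a − 2u)·(n_a − n_{a+2}). -/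
/-!
For a valid sequence `b` the sets `S_i = S_i(b_i)` are pairwise disjoint: for `i < j`, the
set `S_j` lies in the rows of parts `p ≥ b_j ≥ b_i + 2`, in columns `j, …, p + 1 - j`, where
`S_i` only has the columns `i` and `p + 1 - i`. Hence `|U_b| = ∑ᵢ |S_i(b_i)|`, and replacing
`b_{u+1} = a + 1` by `a` changes only one summand. Comparing `S_i(a)` with `S_i(a + 1)` row by
row, they differ only in the rows of parts `a` (`a + 2 - 2i` vertices against none) and `a + 2`
(two vertices against `a + 4 - 2i`), which gives `(a + 2 - 2i)(n_a - n_{a+2})` for `i = u + 1`.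
-/

open Finset

/-- The `u`-coordinates of the vertices of `S_i` (for the value `c`) in the rows of part `p`. -/
def rowPositions (i c p : ℕ) : Finset ℕ :=
  if p = c ∨ p = c + 1 then Icc i (p + 1 - i)
  else if c + 1 < p then {i, p + 1 - i} else ∅

theorem card_rowPositions_sub_succ {i c : ℕ} (hc : 2 * i ≤ c + 1) (p : ℕ) :
    (#(rowPositions i c p) : ℤ) - #(rowPositions i (c + 1) p) =
      ((c : ℤ) + 2 - 2 * i) * ((if p = c then 1 else 0) - (if p = c + 2 then 1 else 0)) := by
  unfold rowPositions
  split_ifs <;> (try simp (disch := omega) only [Nat.card_Icc, card_pair, card_empty]) <;> omega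

def SsetFinset (np : ℕ →₀ ℕ) (i c : ℕ) : Finset Vtx :=
  np.support.biUnion fun p => rowPositions i c p ×ˢ ({p} ×ˢ Icc 1 (np p))

section SsetFinset

variable (np : ℕ →₀ ℕ) {i c : ℕ}

theorem coe_SsetFinset (hi : 1 ≤ i) (hc : 2 * i ≤ c + 1) :
    (SsetFinset np i c : Set Vtx) = Sset np i c := by
  ext ⟨w, p, k⟩
  simp only [SsetFinset, coe_biUnion, mem_coe, Finsupp.mem_support_iff, Set.mem_iUnion,
    mem_product, mem_singleton, mem_Icc, exists_prop, Sset, vertexSet, Set.mem_ofPred_eq,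
    rowPositions]
  constructor
  · rintro ⟨q, hq, hw, rfl, hk⟩
    split_ifs at hw <;> simp only [mem_Icc, mem_insert, mem_singleton, notMem_empty] at hw <;>
      exact ⟨⟨by omega, by omega, hk⟩, by omega⟩
  · rintro ⟨⟨hw, hwp, hk⟩, hS⟩
    refine ⟨p, by omega, ?_, rfl, hk⟩
    split_ifs <;> simp only [mem_Icc, mem_insert, mem_singleton, notMem_empty] <;> omega

theorem card_SsetFinset :
    #(SsetFinset np i c) = ∑ p ∈ np.support, #(rowPositions i c p) * np p := by
  rw [SsetFinset, card_biUnion]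
  · simp [card_product]
  · intro p _ q _ hpq
    simp only [Function.onFun, disjoint_left, mem_product, mem_singleton]
    rintro _ ⟨-, rfl, -⟩ ⟨-, h, -⟩
    exact hpq h

theorem card_SsetFinset_sub_succ (hc : 2 * i ≤ c + 1) :
    (#(SsetFinset np i c) : ℤ) - #(SsetFinset np i (c + 1)) =
      ((c : ℤ) + 2 - 2 * i) * ((np c : ℤ) - np (c + 2)) := by
  have hsum : ∀ d, ∑ p ∈ np.support, (if p = d then (1 : ℤ) else 0) * np p = np d := by
    intro d
    simp only [ite_mul, one_mul, zero_mul, sum_ite_eq', Finsupp.mem_support_iff, ne_eq,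
      ite_not]
    split_ifs with h <;> simp [h]
  calc (#(SsetFinset np i c) : ℤ) - #(SsetFinset np i (c + 1))
      = ∑ p ∈ np.support, ((#(rowPositions i c p) : ℤ) - #(rowPositions i (c + 1) p)) * np p := by
        simp only [card_SsetFinset, Nat.cast_sum, Nat.cast_mul, sub_mul, sum_sub_distrib]
    _ = ∑ p ∈ np.support, ((c : ℤ) + 2 - 2 * i) *
          (((if p = c then 1 else 0) - (if p = c + 2 then 1 else 0)) * np p) := by
        simp only [card_rowPositions_sub_succ hc, mul_assoc]
    _ = ((c : ℤ) + 2 - 2 * i) * ((np c : ℤ) - np (c + 2)) := by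
        rw [← mul_sum]
        simp only [sub_mul, sum_sub_distrib, hsum]

end SsetFinset

section ValidSeq

variable {b : ℕ → ℕ} {r : ℕ}

theorem ValidSeq.add_two_mul_le (hb : ValidSeq b r) {i j : ℕ} (hi : 1 ≤ i) (hij : i ≤ j)
    (hj : j ≤ r) : b i + 2 * (j - i) ≤ b j := by
  induction j, hij using Nat.le_induction with
  | base => simp
  | succ j hij ih =>
    have := hb.2 j (by omega) (by omega)
    have := ih (by omega)
    omega

theorem ValidSeq.two_mul_le_s8 (hb : ValidSeq b r) {i : ℕ} (hi : 1 ≤ i) (hir : i ≤ r) :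
    2 * i ≤ b i + 1 := by
  have := hb.add_two_mul_le le_rfl hi hir
  have := hb.1 1 le_rfl (by omega)
  omega

theorem Sset_disjoint (np : ℕ →₀ ℕ) {i j c d : ℕ} (hij : i < j) (hcd : c + 2 ≤ d)
    (hd : 2 * j ≤ d + 1) : Disjoint (Sset np i c) (Sset np j d) := by
  rw [Set.disjoint_left]
  rintro ⟨w, p, k⟩ h1 h2
  simp only [Sset, vertexSet, Set.mem_ofPred_eq] at h1 h2
  omega

theorem ValidSeq.ncard_UChain (hb : ValidSeq b r) (np : ℕ →₀ ℕ) :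
    (UChain np b r).ncard = ∑ i ∈ Icc 1 r, #(SsetFinset np i (b i)) := by
  have hcoe : ∀ i ∈ Icc 1 r, (SsetFinset np i (b i) : Set Vtx) = Sset np i (b i) := by
    intro i hi
    rw [mem_Icc] at hi
    exact coe_SsetFinset np hi.1 (hb.two_mul_le_s8 hi.1 hi.2)
  have hUChain : UChain np b r = ↑((Icc 1 r).biUnion fun i => SsetFinset np i (b i)) := by
    rw [coe_biUnion, coe_Icc, UChain]
    exact Set.iUnion₂_congr fun i hi => (hcoe i (by simpa using hi)).symm
  have hdisj : ∀ i ∈ Icc 1 r, ∀ j ∈ Icc 1 r, i < j →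
      Disjoint (SsetFinset np i (b i)) (SsetFinset np j (b j)) := by
    intro i hi j hj hij
    rw [← disjoint_coe, hcoe i hi, hcoe j hj]
    rw [mem_Icc] at hi hj
    have := hb.add_two_mul_le hi.1 hij.le hj.2
    exact Sset_disjoint np hij (by omega) (hb.two_mul_le_s8 hj.1 hj.2)
  rw [hUChain, Set.ncard_coe_finset, card_biUnion]
  intro i hi j hj hij
  rcases hij.lt_or_gt with h | h
  · exact hdisj i hi j hj h
  · exact (hdisj j hj i hi h).symm

theorem ValidSeq.replace_succ (hb : ValidSeq b r) {u a : ℕ} (hlo : b u + 2 ≤ a)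
    (hhi : a ≤ b (u + 1)) : ValidSeq (fun j => if j = u + 1 then a else b j) r := by
  refine ⟨fun j hj hjr => ?_, fun j hj hjr => ?_⟩
  · dsimp only
    split_ifs
    · omega
    · exact hb.1 j hj hjr
  · have := hb.2 j hj hjr
    dsimp only
    split_ifs with h h'
    · omega
    · subst h; omega
    · obtain rfl : j = u := by omega
      omega
    · omega

theorem ValidSeq.ncard_UChain_sub (hb : ValidSeq b r) {b' : ℕ → ℕ} (hb' : ValidSeq b' r)
    {m : ℕ} (hm : m ∈ Icc 1 r) (hbb' : ∀ j, j ≠ m → b' j = b j) (np : ℕ →₀ ℕ) :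
    ((UChain np b' r).ncard : ℤ) - (UChain np b r).ncard =
      #(SsetFinset np m (b' m)) - #(SsetFinset np m (b m)) := by
  rw [hb'.ncard_UChain, hb.ncard_UChain, Nat.cast_sum, Nat.cast_sum, ← sum_sub_distrib,
    sum_eq_single_of_mem m hm]
  intro j _ hj
  rw [hbb' j hj, sub_self]

end ValidSeq

theorem replacement_case_two_one_general
    (np : ℕ →₀ ℕ)
    (r : ℕ) (b : ℕ → ℕ) (hb : ValidSeq b r)
    (u : ℕ) (hu1 : 1 ≤ u) (hur : u < r)
    (a : ℕ) (hba : b u + 2 ≤ a) (hnext : b (u + 1) = a + 1) :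
    ValidSeq (fun j => if j = u + 1 then a else b j) r ∧
    ((UChain np (fun j => if j = u + 1 then a else b j) r).ncard : ℤ)
        - ((UChain np b r).ncard : ℤ)
      = ((a : ℤ) - 2 * (u : ℤ)) * ((np a : ℤ) - (np (a + 2) : ℤ)) := by
  have hb' := hb.replace_succ hba (by omega)
  have hu : 2 * u ≤ b u + 1 := hb.two_mul_le_s8 hu1 hur.le
  refine ⟨hb', ?_⟩
  rw [hb.ncard_UChain_sub hb' (mem_Icc.2 ⟨by omega, hur⟩) (fun j hj => if_neg hj) np,
    if_pos rfl, hnext, card_SsetFinset_sub_succ np (by omega)]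
  push_cast
  ring

/-- Case 2.1 of Proposition 1.13: if `b_u + 2 ≤ a` and `b_{u+1} = a + 1`,
then `b_1, …, b_u, a, b_{u+2}, …, b_r` defines an `r`-`U`-chain and
`|U_{b_1,…,b_u,a,b_{u+2},…,b_r}| − |U_{b_1,…,b_r}| = (a − 2u)·(n_a − n_{a+2})`. -/
theorem replacement_case_two_one
    (n : ℕ) (hn : 0 < n) (np : ℕ →₀ ℕ) (hP : IsPartitionOf n np)
    (r : ℕ) (b : ℕ → ℕ) (hb : ValidSeq b r)
    (u : ℕ) (hu1 : 1 ≤ u) (hur : u < r)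
    (a : ℕ) (ha : 1 ≤ a) (hba : b u + 2 ≤ a) (hnext : b (u + 1) = a + 1) :
    ValidSeq (fun j => if j = u + 1 then a else b j) r ∧
    ((UChain np (fun j => if j = u + 1 then a else b j) r).ncard : ℤ)
        - ((UChain np b r).ncard : ℤ)
      = ((a : ℤ) - 2 * (u : ℤ)) * ((np a : ℤ) - (np (a + 2) : ℤ)) :=
  replacement_case_two_one_general np r b hb u hu1 hur a hba hnext
end

section
/- Let P be a partition of a positive integer n and let (P_1, …, P_{r+1}; a_1, …, a_r) be a U-process of length r for P, with associated subsets C_1, …, C_r of the vertex set of D_P. Then there exist positive integers b_1 < b_2 < … < b_r with b_{i+1} ≥ b_i + 2 for 1 ≤ i < r such that C_1 ∪ … ∪ C_r = U_{b_1,…,b_r} as subsets of the vertex set of D_P. -/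
/-! ### Auxiliary lemmas -/

lemma mem_Sset_iff {np : ℕ →₀ ℕ} {i β : ℕ} {u p k : ℕ} :
    ((u, p, k) : Vtx) ∈ Sset np i β ↔
      ((1 ≤ u ∧ u ≤ p ∧ 1 ≤ k ∧ k ≤ np p) ∧
        (((p = β ∨ p = β + 1) ∧ i ≤ u ∧ u + i ≤ p + 1) ∨
          (β + 1 < p ∧ (u = i ∨ u + i = p + 1)))) := Iff.rfl

lemma mem_UChain_iff {np : ℕ →₀ ℕ} {b : ℕ → ℕ} {r : ℕ} {x : Vtx} :
    x ∈ UChain np b r ↔ ∃ j, 1 ≤ j ∧ j ≤ r ∧ x ∈ Sset np j (b j) := by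
  simp [UChain, Set.mem_Icc, and_assoc]

lemma UChain_subset_vertexSet {np : ℕ →₀ ℕ} {b : ℕ → ℕ} {r : ℕ} :
    UChain np b r ⊆ vertexSet np := by
  intro x hx
  rw [mem_UChain_iff] at hx
  obtain ⟨j, _, _, hj⟩ := hx
  exact hj.1

lemma iotaMap_apply (a u p k : ℕ) :
    iotaMap a (u, p, k) = if p < a then (u, p, k) else (u + 1, p + 2, k) := rfl

lemma mem_iotaMap_image {P' : ℕ →₀ ℕ} {a : ℕ} {T : Set Vtx} (hT : T ⊆ vertexSet P')
    {u p k : ℕ} :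
    ((u, p, k) : Vtx) ∈ iotaMap a '' T ↔
      (p < a ∧ ((u, p, k) : Vtx) ∈ T) ∨
        (a + 2 ≤ p ∧ 2 ≤ u ∧ ((u - 1, p - 2, k) : Vtx) ∈ T) := by
  constructor
  · rintro ⟨⟨u', p', k'⟩, hy, hxy⟩
    have hv : 1 ≤ u' ∧ u' ≤ p' ∧ 1 ≤ k' ∧ k' ≤ P' p' := hT hy
    rw [iotaMap_apply] at hxy
    split_ifs at hxy with h
    · obtain ⟨h1, h2, h3⟩ : u' = u ∧ p' = p ∧ k' = k := by
        simpa [Prod.ext_iff] using hxy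
      subst h1; subst h2; subst h3
      exact Or.inl ⟨h, hy⟩
    · obtain ⟨h1, h2, h3⟩ : u' + 1 = u ∧ p' + 2 = p ∧ k' = k := by
        simpa [Prod.ext_iff] using hxy
      refine Or.inr ⟨by omega, by omega, ?_⟩
      have e : ((u - 1, p - 2, k) : Vtx) = (u', p', k') := by
        simp only [Prod.ext_iff]
        refine ⟨by omega, by omega, by omega⟩
      rw [e]; exact hy
  · rintro (⟨h, hy⟩ | ⟨h1, h2, hy⟩)
    · refine ⟨(u, p, k), hy, ?_⟩
      rw [iotaMap_apply, if_pos h]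
    · refine ⟨(u - 1, p - 2, k), hy, ?_⟩
      rw [iotaMap_apply, if_neg (by omega)]
      simp only [Prod.ext_iff]
      refine ⟨by omega, by omega, trivial⟩

lemma validSeq_mono {c : ℕ → ℕ} {r : ℕ} (hc : ValidSeq c r) {i j : ℕ}
    (hi : 1 ≤ i) (hij : i ≤ j) (hjr : j ≤ r) : c i + 2 * (j - i) ≤ c j := by
  induction j with
  | zero => omega
  | succ n ih =>
    rcases Nat.lt_or_ge i (n + 1) with h | h
    · have h1 := ih (by omega) (by omega)
      have h2 := hc.2 n (by omega) (by omega)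
      omega
    · have : i = n + 1 := by omega
      subst this
      simp

lemma step_lemma (P P' : ℕ →₀ ℕ) (a : ℕ) (ha : 1 ≤ a)
    (hP' : ∀ m, P' m = if m < a then P m else P (m + 2))
    (r : ℕ) (c : ℕ → ℕ) (hc : ValidSeq c r) :
    ∃ b : ℕ → ℕ, ValidSeq b (r + 1) ∧
      Sset P 1 a ∪ iotaMap a '' UChain P' c r = UChain P b (r + 1) := by
  classical
  set s := Nat.findGreatest (fun j => c j < a) r with hs_def
  have hs_le : s ≤ r := Nat.findGreatest_le r
  have hF2 : ∀ j, s < j → j ≤ r → a ≤ c j := by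
    intro j h1 h2
    by_contra h
    rw [hs_def] at h1
    exact Nat.findGreatest_is_greatest h1 h2 (by omega)
  have hF1 : ∀ j, 1 ≤ j → j ≤ s → c j < a := by
    intro j h1 h2
    have hs1 : c s < a := Nat.findGreatest_of_ne_zero (P := fun j => c j < a) hs_def.symm (by omega)
    have := validSeq_mono hc h1 h2 hs_le
    omega
  have hcpos : ∀ j, 1 ≤ j → j ≤ r → 1 ≤ c j := hc.1
  have hclow : ∀ j, 1 ≤ j → j ≤ r → 2 * j ≤ c j + 1 := by
    intro j h1 h2
    have h3 := validSeq_mono hc (le_refl 1) h1 h2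
    have h4 := hcpos 1 (le_refl 1) (le_trans h1 h2)
    omega
  set A := if 1 ≤ s ∧ c s + 1 = a then a + 1 else a with hA_def
  have hA : (A = a ∧ ¬(1 ≤ s ∧ c s + 1 = a)) ∨ (A = a + 1 ∧ 1 ≤ s ∧ c s + 1 = a) := by
    by_cases h : 1 ≤ s ∧ c s + 1 = a
    · right; exact ⟨by rw [hA_def, if_pos h], h⟩
    · left; exact ⟨by rw [hA_def, if_neg h], h⟩
  have hAa : a ≤ A ∧ A ≤ a + 1 := by rcases hA with ⟨h, _⟩ | ⟨h, _⟩ <;> omega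
  set b : ℕ → ℕ := fun j => if j ≤ s then c j else if j = s + 1 then A else c (j - 1) + 2
    with hb_def
  have hb : ∀ j, b j = if j ≤ s then c j else if j = s + 1 then A else c (j - 1) + 2 :=
    fun j => rfl
  have hb1 : ∀ j, j ≤ s → b j = c j := fun j h => by rw [hb j, if_pos h]
  have hb2 : b (s + 1) = A := by rw [hb (s + 1), if_neg (by omega), if_pos rfl]
  have hb3 : ∀ j, s + 1 < j → b j = c (j - 1) + 2 :=
    fun j h => by rw [hb j, if_neg (by omega), if_neg (by omega)]
  have hPeq : ∀ m, m < a → P' m = P m := fun m h => by rw [hP' m, if_pos h]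
  have hPeq2 : ∀ m, a + 2 ≤ m → P' (m - 2) = P m := by
    intro m h
    rw [hP' (m - 2), if_neg (by omega)]
    congr 1
    omega
  refine ⟨b, ⟨?_, ?_⟩, ?_⟩
  · -- positivity
    intro i h1 h2
    rw [hb i]
    split_ifs with h h'
    · exact hcpos i h1 (le_trans h hs_le)
    · omega
    · have := hcpos (i - 1) (by omega) (by omega)
      omega
  · -- gaps
    intro i h1 h2
    by_cases hi1 : i + 1 ≤ s
    · rw [hb1 i (by omega), hb1 (i + 1) hi1]
      exact hc.2 i h1 (by omega)
    · by_cases hi2 : i ≤ s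
      · -- i = s
        rw [hb1 i hi2, show i + 1 = s + 1 from by omega, hb2]
        have hlt := hF1 i h1 hi2
        have hieq : i = s := by omega
        rw [hieq] at hlt
        rw [show c i = c s from by rw [hieq]]
        rcases hA with ⟨hAe, hAn⟩ | ⟨hAe, hs1, hcs⟩ <;> omega
      · by_cases hi3 : i = s + 1
        · rw [hi3, hb2, hb3 (s + 1 + 1) (by omega)]
          have e : s + 1 + 1 - 1 = s + 1 := rfl
          rw [e]
          have hge := hF2 (s + 1) (by omega) (by omega)
          rcases hA with ⟨hAe, hAn⟩ | ⟨hAe, hs1, hcs⟩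
          · omega
          · have := hc.2 s hs1 (by omega)
            omega
        · rw [hb3 i (by omega), hb3 (i + 1) (by omega)]
          have e : i + 1 - 1 = i := rfl
          rw [e]
          have h3 := hc.2 (i - 1) (by omega) (by omega)
          rw [show i - 1 + 1 = i from by omega] at h3
          omega
  · -- the set identity
    have hsub : UChain P' c r ⊆ vertexSet P' := UChain_subset_vertexSet
    ext ⟨u, p, k⟩
    simp only [Set.mem_union, mem_iotaMap_image hsub, mem_UChain_iff]
    constructor
    · rintro (hx | ⟨hpa, j, hj1, hjr, hSj⟩ | ⟨hp2, hu2, j, hj1, hjr, hSj⟩)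
      · -- piece L0 : Sset P 1 a
        rw [mem_Sset_iff] at hx
        obtain ⟨hV, hq⟩ := hx
        rcases hq with ⟨hp, hu1, hu2⟩ | ⟨hp, hu⟩
        · -- block at p ∈ {a, a+1}
          by_cases h1 : 1 ≤ u ∧ u ≤ s
          · refine ⟨u, h1.1, by omega, ?_⟩
            rw [mem_Sset_iff]
            refine ⟨hV, ?_⟩
            rw [hb1 u h1.2]
            have hcu := hF1 u h1.1 h1.2
            have hcul := hclow u h1.1 (by omega)
            by_cases h2 : c u + 1 < p
            · exact Or.inr ⟨h2, Or.inl rfl⟩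
            · exact Or.inl ⟨Or.inr (by omega), le_refl u, by omega⟩
          · by_cases h2 : p + 1 ≤ u + s
            · have hs1 : 1 ≤ s := by omega
              have hcs := hF1 s hs1 (le_refl s)
              have hlows := hclow s hs1 (by omega)
              have hpu : p + 1 - u ≤ s := by omega
              have hi1 : 1 ≤ p + 1 - u := by omega
              refine ⟨p + 1 - u, hi1, by omega, ?_⟩
              rw [mem_Sset_iff]
              refine ⟨hV, ?_⟩
              rw [hb1 _ hpu]
              have hci := hF1 (p + 1 - u) hi1 hpu
              by_cases h3 : c (p + 1 - u) + 1 < p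
              · exact Or.inr ⟨h3, Or.inr (by omega)⟩
              · have hcil := hclow (p + 1 - u) hi1 (by omega)
                exact Or.inl ⟨Or.inr (by omega), by omega, by omega⟩
            · rcases hA with ⟨hAe, hAn⟩ | ⟨hAe, hs1, hcs⟩
              · refine ⟨s + 1, by omega, by omega, ?_⟩
                rw [mem_Sset_iff]
                refine ⟨hV, ?_⟩
                rw [hb2]
                exact Or.inl ⟨by omega, by omega, by omega⟩
              · by_cases hpa : p = a
                · refine ⟨s, hs1, by omega, ?_⟩
                  rw [mem_Sset_iff]
                  refine ⟨hV, ?_⟩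
                  rw [hb1 s (le_refl s)]
                  exact Or.inl ⟨Or.inr (by omega), by omega, by omega⟩
                · refine ⟨s + 1, by omega, by omega, ?_⟩
                  rw [mem_Sset_iff]
                  refine ⟨hV, ?_⟩
                  rw [hb2]
                  exact Or.inl ⟨Or.inl (by omega), by omega, by omega⟩
        · -- boundary of L0 : a + 1 < p, u ∈ {1, p}
          refine ⟨1, le_refl 1, by omega, ?_⟩
          rw [mem_Sset_iff]
          refine ⟨hV, ?_⟩
          by_cases hs0 : 1 ≤ s
          · rw [hb1 1 hs0]
            have := hF1 1 (le_refl 1) hs0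
            exact Or.inr ⟨by omega, hu⟩
          · have hb1A : b 1 = A := by
              rw [hb 1, if_neg (by omega), if_pos (by omega)]
            rw [hb1A]
            rcases hA with ⟨hAe, hAn⟩ | ⟨hAe, hs1, hcs⟩
            · exact Or.inr ⟨by omega, hu⟩
            · omega
      · -- identity part : p < a
        rw [mem_Sset_iff] at hSj
        obtain ⟨hV', hq⟩ := hSj
        have hPp := hPeq p hpa
        have hjs : j ≤ s := by
          by_contra h
          have := hF2 j (by omega) hjr
          rcases hq with ⟨hp, _, _⟩ | ⟨hp, _⟩ <;> omega
        refine ⟨j, hj1, by omega, ?_⟩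
        rw [mem_Sset_iff]
        rw [hb1 j hjs]
        exact ⟨⟨hV'.1, hV'.2.1, hV'.2.2.1, by rw [← hPp]; exact hV'.2.2.2⟩, hq⟩
      · -- image part : a + 2 ≤ p, 2 ≤ u
        rw [mem_Sset_iff] at hSj
        obtain ⟨hV', hq⟩ := hSj
        have hPk : k ≤ P p := by rw [← hPeq2 p hp2]; exact hV'.2.2.2
        have hV : 1 ≤ u ∧ u ≤ p ∧ 1 ≤ k ∧ k ≤ P p :=
          ⟨by omega, by omega, hV'.2.2.1, hPk⟩
        refine ⟨j + 1, by omega, by omega, ?_⟩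
        rw [mem_Sset_iff]
        refine ⟨hV, ?_⟩
        obtain ⟨hV1, hV2, _, _⟩ := hV'
        by_cases hjs : j + 1 ≤ s
        · rw [hb1 _ hjs]
          have hcj := hF1 j hj1 (by omega)
          have hcj1 := hF1 (j + 1) (by omega) hjs
          have hstep := hc.2 j hj1 (by omega)
          rcases hq with ⟨hp, hu', hu''⟩ | ⟨hp, hu'⟩
          · exfalso; omega
          · exact Or.inr ⟨by omega, by omega⟩
        · by_cases hjs1 : j = s
          · subst hjs1
            rw [hb2]
            have hs1 : 1 ≤ s := hj1
            have hcs' := hF1 s hs1 (le_refl s)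
            rcases hA with ⟨hAe, hAn⟩ | ⟨hAe, hs1', hcs⟩
            · rcases hq with ⟨hp, hu', hu''⟩ | ⟨hp, hu'⟩
              · exfalso; omega
              · exact Or.inr ⟨by omega, by omega⟩
            · rcases hq with ⟨hp, hu', hu''⟩ | ⟨hp, hu'⟩
              · exact Or.inl ⟨by omega, by omega, by omega⟩
              · exact Or.inr ⟨by omega, by omega⟩
          · have hbj : b (j + 1) = c j + 2 := by
              rw [hb3 (j + 1) (by omega)]
              rfl
            rw [hbj]
            rcases hq with ⟨hp, hu', hu''⟩ | ⟨hp, hu'⟩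
            · exact Or.inl ⟨by omega, by omega, by omega⟩
            · exact Or.inr ⟨by omega, by omega⟩
    · rintro ⟨i, hi1, hir, hSi⟩
      rw [mem_Sset_iff] at hSi
      obtain ⟨hV, hq⟩ := hSi
      by_cases hpa : p = a ∨ p = a + 1
      · left
        rw [mem_Sset_iff]
        exact ⟨hV, Or.inl ⟨hpa, hV.1, by omega⟩⟩
      · by_cases hpl : p < a
        · -- p < a : identity part with j = i
          have his : i ≤ s := by
            by_contra h
            have h1 : a ≤ b i := by
              by_cases h2 : i = s + 1
              · rw [h2, hb2]; omega
              · rw [hb3 i (by omega)]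
                have := hF2 (i - 1) (by omega) (by omega)
                omega
            rcases hq with ⟨hp, _, _⟩ | ⟨hp, _⟩ <;> omega
          right; left
          refine ⟨hpl, i, hi1, by omega, ?_⟩
          rw [mem_Sset_iff]
          have hPp := hPeq p hpl
          rw [hb1 i his] at hq
          exact ⟨⟨hV.1, hV.2.1, hV.2.2.1, by rw [hPp]; exact hV.2.2.2⟩, hq⟩
        · have hp2 : a + 2 ≤ p := by omega
          by_cases hi2 : 2 ≤ i
          · -- image part with j = i - 1
            right; right
            have hblow : 2 * i ≤ b i + 1 := by
              by_cases h1 : i ≤ s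
              · rw [hb1 i h1]
                exact hclow i hi1 (by omega)
              · by_cases h2 : i = s + 1
                · rw [h2, hb2]
                  rcases hA with ⟨hAe, hAn⟩ | ⟨hAe, hs1, hcs⟩
                  · by_cases hs0 : 1 ≤ s
                    · have := hclow s hs0 (by omega)
                      have := hF1 s hs0 (le_refl s)
                      omega
                    · omega
                  · have := hclow s hs1 (by omega)
                    omega
                · rw [hb3 i (by omega)]
                  have := hclow (i - 1) (by omega) (by omega)
                  omega
            refine ⟨hp2, ?_, i - 1, by omega, by omega, ?_⟩
            · rcases hq with ⟨hp, hu1, _⟩ | ⟨hp, hu⟩ <;> omega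
            · rw [mem_Sset_iff]
              have hV' : 1 ≤ u - 1 ∧ u - 1 ≤ p - 2 ∧ 1 ≤ k ∧ k ≤ P' (p - 2) := by
                refine ⟨?_, ?_, hV.2.2.1, by rw [hPeq2 p hp2]; exact hV.2.2.2⟩
                · rcases hq with ⟨hp, hu1, _⟩ | ⟨hp, hu⟩ <;> omega
                · rcases hq with ⟨hp, hu1, hu2⟩ | ⟨hp, hu⟩ <;> omega
              refine ⟨hV', ?_⟩
              by_cases h1 : i ≤ s
              · rw [hb1 i h1] at hq
                have hci := hF1 i hi1 h1
                rcases hq with ⟨hp, _, _⟩ | ⟨hp, hu⟩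
                · exfalso; omega
                · have hstep := hc.2 (i - 1) (by omega) (by omega)
                  rw [show i - 1 + 1 = i from by omega] at hstep
                  exact Or.inr ⟨by omega, by omega⟩
              · by_cases h2 : i = s + 1
                · rw [h2, hb2] at hq
                  have hjeq : i - 1 = s := by omega
                  rw [hjeq]
                  have hs1 : 1 ≤ s := by omega
                  have hcs' := hF1 s hs1 (le_refl s)
                  rcases hA with ⟨hAe, hAn⟩ | ⟨hAe, hs1', hcs⟩
                  · rcases hq with ⟨hp, hu1, hu2⟩ | ⟨hp, hu⟩
                    · exfalso; omega
                    · exact Or.inr ⟨by omega, by omega⟩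
                  · rcases hq with ⟨hp, hu1, hu2⟩ | ⟨hp, hu⟩
                    · exact Or.inl ⟨by omega, by omega, by omega⟩
                    · exact Or.inr ⟨by omega, by omega⟩
                · rw [hb3 i (by omega)] at hq
                  rcases hq with ⟨hp, hu1, hu2⟩ | ⟨hp, hu⟩
                  · exact Or.inl ⟨by omega, by omega, by omega⟩
                  · exact Or.inr ⟨by omega, by omega⟩
          · -- i = 1
            have hieq : i = 1 := by omega
            subst hieq
            left
            rw [mem_Sset_iff]
            refine ⟨hV, ?_⟩
            by_cases hs0 : 1 ≤ s
            · rw [hb1 1 hs0] at hq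
              have := hF1 1 (le_refl 1) hs0
              rcases hq with ⟨hp, _, _⟩ | ⟨hp, hu⟩
              · exfalso; omega
              · exact Or.inr ⟨by omega, hu⟩
            · have hb1A : b 1 = A := by
                rw [hb 1, if_neg (by omega), if_pos (by omega)]
              rw [hb1A] at hq
              rcases hA with ⟨hAe, hAn⟩ | ⟨hAe, hs1, hcs⟩
              · rcases hq with ⟨hp, _, _⟩ | ⟨hp, hu⟩
                · exfalso; omega
                · exact Or.inr ⟨by omega, hu⟩
              · omega

lemma iotaComp_shift (aa : ℕ → ℕ) : ∀ k,
    iotaComp aa (k + 1) = iotaMap (aa 1) ∘ iotaComp (fun j => aa (j + 1)) k := by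
  intro k
  induction k with
  | zero => rfl
  | succ n ih =>
    calc iotaComp aa (n + 1 + 1) = iotaComp aa (n + 1) ∘ iotaMap (aa (n + 1 + 1)) := rfl
      _ = (iotaMap (aa 1) ∘ iotaComp (fun j => aa (j + 1)) n) ∘ iotaMap (aa (n + 1 + 1)) := by
          rw [ih]
      _ = iotaMap (aa 1) ∘ iotaComp (fun j => aa (j + 1)) (n + 1) := rfl

lemma main_aux : ∀ (r : ℕ) (Ps : ℕ → ℕ →₀ ℕ) (aa : ℕ → ℕ),
    (∀ i, 1 ≤ i → i ≤ r →
      1 ≤ aa i ∧ ∀ m, Ps (i + 1) m = if m < aa i then Ps i m else Ps i (m + 2)) →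
    ∃ b : ℕ → ℕ, ValidSeq b r ∧
      (⋃ i ∈ Set.Icc 1 r, Cset Ps aa i) = UChain (Ps 1) b r := by
  intro r
  induction r with
  | zero =>
    intro Ps aa _
    refine ⟨fun _ => 1, ⟨fun i h1 h2 => by omega, fun i h1 h2 => by omega⟩, ?_⟩
    have he : Set.Icc 1 0 = (∅ : Set ℕ) := Set.Icc_eq_empty (by omega)
    rw [UChain, he]
    simp
  | succ r ih =>
    intro Ps aa h
    obtain ⟨c, hc, hU⟩ := ih (fun j => Ps (j + 1)) (fun j => aa (j + 1))
      (fun i h1 h2 => h (i + 1) (by omega) (by omega))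
    obtain ⟨ha1, hrec⟩ := h 1 (le_refl 1) (by omega)
    obtain ⟨b, hb, heq⟩ := step_lemma (Ps 1) (Ps 2) (aa 1) ha1 hrec r c hc
    refine ⟨b, hb, ?_⟩
    rw [← heq, ← hU]
    have hC1 : Cset Ps aa 1 = Sset (Ps 1) 1 (aa 1) := by
      show iotaComp aa 0 '' Sset (Ps 1) 1 (aa 1) = Sset (Ps 1) 1 (aa 1)
      rw [show iotaComp aa 0 = id from rfl, Set.image_id]
    have hCsucc : ∀ i, 1 ≤ i → Cset Ps aa (i + 1) =
        iotaMap (aa 1) '' Cset (fun j => Ps (j + 1)) (fun j => aa (j + 1)) i := by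
      intro i hi
      obtain ⟨i', rfl⟩ : ∃ i', i = i' + 1 := ⟨i - 1, by omega⟩
      show iotaComp aa (i' + 1 + 1 - 1) '' Sset (Ps (i' + 1 + 1)) 1 (aa (i' + 1 + 1)) = _
      have e : i' + 1 + 1 - 1 = i' + 1 := rfl
      rw [e, iotaComp_shift aa i', Set.image_comp]
      rfl
    ext x
    simp only [Set.mem_iUnion, Set.mem_union, Set.mem_Icc, Set.mem_image]
    constructor
    · rintro ⟨i, ⟨hi1, hi2⟩, hx⟩
      by_cases h1 : i = 1
      · subst h1
        rw [hC1] at hx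
        exact Or.inl hx
      · obtain ⟨i', rfl⟩ : ∃ i', i = i' + 1 := ⟨i - 1, by omega⟩
        rw [hCsucc i' (by omega)] at hx
        obtain ⟨y, hy, hxy⟩ := hx
        exact Or.inr ⟨y, ⟨i', ⟨by omega, by omega⟩, hy⟩, hxy⟩
    · rintro (hx | ⟨y, ⟨i, ⟨hi1, hi2⟩, hy⟩, hxy⟩)
      · refine ⟨1, ⟨le_refl 1, by omega⟩, ?_⟩
        rw [hC1]
        exact hx
      · refine ⟨i + 1, ⟨by omega, by omega⟩, ?_⟩
        rw [hCsucc i hi1]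
        exact ⟨y, hy, hxy⟩

/-- Proposition 2.5: for a `U`-process `(P_1,…,P_{r+1}; a_1,…,a_r)` for `P`,
the union `C_1 ∪ ⋯ ∪ C_r` equals some `r`-`U`-chain `U_{b_1,…,b_r}` in `D_P`. -/
theorem uprocess_union_eq_UChain
    (n : ℕ) (hn : 0 < n) (np : ℕ →₀ ℕ) (hP : IsPartitionOf n np)
    (r : ℕ) (Ps : ℕ → ℕ →₀ ℕ) (aa : ℕ → ℕ) (hproc : IsUProcess r np Ps aa) :
    ∃ b : ℕ → ℕ, ValidSeq b r ∧
      (⋃ i ∈ Set.Icc 1 r, Cset Ps aa i) = UChain np b r := by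
  obtain ⟨b, hb, heq⟩ := main_aux r Ps aa
    (fun i h1 h2 => ⟨((hproc.2 i h1 h2).1).1, (hproc.2 i h1 h2).2⟩)
  refine ⟨b, hb, ?_⟩
  rw [heq, hproc.1]
end
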